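/- arXiv:1904.07300 — 8 statements merged into one kernel-verified Lean document; each statement's English description precedes it below -/
import Mathlib

section
/- Let α be a unital partial action of a group G on a unital K-algebra A, where each ideal D_g equals 1_g·A for a central idempotent 1_g. Then the map π^α : G → End_K(A) given by π^α_g(a) = α_g(1_{g⁻¹} a) is a partial representation of G, i.e. π^α_1 = id, π^α_{g⁻¹} π^α_g π^α_h = π^α_{g⁻¹} π^α_{gh}, and π^α_g π^α_h π^α_{h⁻¹} = π^α_{gh} π^α_{h⁻¹} for all g, h ∈ G. -/
/-!
The key identity is `π_g (1_h a) = 1_{gh} π_g a`. It comes from `α_g (1_{g⁻¹} 1_h) = 1_g 1_{gh}`: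
both sides lie in `D_g ∩ D_{gh}`, and `α_g` maps `D_{g⁻¹} ∩ D_h` into `D_g ∩ D_{gh}` with inverse
`α_{g⁻¹}` mapping back, so the image of the unit `1_{g⁻¹} 1_h` of `D_{g⁻¹} ∩ D_h` is the unit of
`D_g ∩ D_{gh}`. With it,
`π_g π_h a = α_g α_h (1_{h⁻¹} 1_{(gh)⁻¹} a) = α_{gh} (1_{(gh)⁻¹} 1_{h⁻¹} a) = 1_g π_{gh} a`,
and both partial-representation identities follow, because `π_{g⁻¹}` absorbs a left factor `1_g`
and `π_{gh}` maps `D_{h⁻¹}` into `D_g`.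
-/

/-- `act g` plays the role of `α_g`; only its values on `D_{g⁻¹} = {x | e g⁻¹ * x = x}` matter. -/
structure IsUnitalPartialAction {G A : Type*} [Group G] [Monoid A] (e : G → A)
    (act : G → A → A) : Prop where
  commute : ∀ g a, Commute (e g) a
  idem : ∀ g, IsIdempotentElem (e g)
  act_one : ∀ a, act 1 a = a
  mem_range : ∀ g a, e g * act g (e g⁻¹ * a) = act g (e g⁻¹ * a)
  map_mul : ∀ g a b,
    act g (e g⁻¹ * a * (e g⁻¹ * b)) = act g (e g⁻¹ * a) * act g (e g⁻¹ * b)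
  act_act : ∀ g h a, e h⁻¹ * a = a → e g⁻¹ * act h a = act h a →
    e (g * h)⁻¹ * a = a ∧ act g (act h a) = act (g * h) a

def piAlpha {G A : Type*} [Group G] [Mul A] (e : G → A) (act : G → A → A) (g : G) (a : A) : A :=
  act g (e g⁻¹ * a)

namespace IsUnitalPartialAction

variable {G A : Type*} [Group G] [Monoid A] {e : G → A} {act : G → A → A}

theorem map_mul_of_mem (P : IsUnitalPartialAction e act) {g : G} {x y : A}
    (hx : e g⁻¹ * x = x) (hy : e g⁻¹ * y = y) : act g (x * y) = act g x * act g y := by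
  simpa only [hx, hy] using P.map_mul g x y

theorem act_mem (P : IsUnitalPartialAction e act) {g : G} {x : A} (hx : e g⁻¹ * x = x) :
    e g * act g x = act g x := by
  simpa only [hx] using P.mem_range g x

theorem act_inv_act (P : IsUnitalPartialAction e act) {g : G} {x : A} (hx : e g⁻¹ * x = x) :
    act g⁻¹ (act g x) = x := by
  have hy : e g⁻¹⁻¹ * act g x = act g x := by rw [inv_inv]; exact P.act_mem hx
  simpa only [inv_mul_cancel, P.act_one] using (P.act_act g⁻¹ g x hx hy).2

theorem act_act_of_mem (P : IsUnitalPartialAction e act) {g h : G} {x : A}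
    (hh : e h⁻¹ * x = x) (hgh : e (g * h)⁻¹ * x = x) :
    e g⁻¹ * act h x = act h x ∧ act g (act h x) = act (g * h) x := by
  have hy : e h⁻¹⁻¹ * act h x = act h x := by rw [inv_inv]; exact P.act_mem hh
  have hx : e (g * h)⁻¹ * act h⁻¹ (act h x) = act h⁻¹ (act h x) := by
    rwa [P.act_inv_act hh]
  obtain ⟨hmem, hcomp⟩ := P.act_act (g * h) h⁻¹ (act h x) hy hx
  rw [mul_inv_cancel_right] at hmem hcomp
  rw [P.act_inv_act hh] at hcomp
  exact ⟨hmem, hcomp.symm⟩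

theorem act_mem_mul (P : IsUnitalPartialAction e act) {g h : G} {x : A}
    (hg : e g⁻¹ * x = x) (hh : e h * x = x) : e (g * h) * act g x = act g x := by
  have hh' : e ((g * h)⁻¹ * g)⁻¹ * x = x := by
    rwa [mul_inv_rev, inv_inv, inv_mul_cancel_left]
  simpa only [inv_inv] using (P.act_act_of_mem hg hh').1

theorem act_e_mul_e (P : IsUnitalPartialAction e act) (g h : G) :
    act g (e g⁻¹ * e h) = e (g * h) * e g := by
  set u := act g (e g⁻¹ * e h)
  set w := e (g * h) * e g
  have hx_g : e g⁻¹ * (e g⁻¹ * e h) = e g⁻¹ * e h := (P.idem _).mul_self_mul _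
  have hx_h : e h * (e g⁻¹ * e h) = e g⁻¹ * e h := by
    rw [(P.commute h _).left_comm, (P.idem h).eq]
  have hw_g : e g⁻¹⁻¹ * w = w := by
    rw [inv_inv, (P.commute g _).left_comm, (P.idem g).eq]
  have hw_gh : e (g * h) * w = w := (P.idem _).mul_self_mul _
  have hu_g : e g * u = u := P.mem_range g (e h)
  have hu_gh : e (g * h) * u = u := P.act_mem_mul hx_g hx_h
  have hv_g : e g⁻¹ * act g⁻¹ w = act g⁻¹ w := P.act_mem hw_g
  have hv_h : e h * act g⁻¹ w = act g⁻¹ w := by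
    simpa only [inv_mul_cancel_left] using P.act_mem_mul hw_g hw_gh
  have hw : act g (act g⁻¹ w) = w := by simpa only [inv_inv] using P.act_inv_act hw_g
  calc u = u * w := by
        rw [← mul_assoc, ← (P.commute _ u).eq, hu_gh, ← (P.commute _ u).eq, hu_g]
    _ = act g (e g⁻¹ * e h * act g⁻¹ w) := by
        rw [P.map_mul_of_mem hx_g hv_g, hw]
    _ = w := by rw [mul_assoc, hv_h, hv_g, hw]

theorem piAlpha_e_mul (P : IsUnitalPartialAction e act) (g h : G) (a : A) :
    piAlpha e act g (e h * a) = e (g * h) * piAlpha e act g a :=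
  calc act g (e g⁻¹ * (e h * a)) = act g (e g⁻¹ * e h * (e g⁻¹ * a)) := by
        rw [mul_assoc, (P.commute h _).left_comm, (P.idem _).mul_self_mul]
    _ = e (g * h) * e g * act g (e g⁻¹ * a) := by rw [P.map_mul, P.act_e_mul_e]
    _ = e (g * h) * act g (e g⁻¹ * a) := by rw [mul_assoc, P.mem_range]

theorem piAlpha_piAlpha (P : IsUnitalPartialAction e act) (g h : G) (a : A) :
    piAlpha e act g (piAlpha e act h a) = e g * piAlpha e act (g * h) a := by
  have hh : e h⁻¹ * (e h⁻¹ * (e (g * h)⁻¹ * a)) = e h⁻¹ * (e (g * h)⁻¹ * a) :=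
    (P.idem _).mul_self_mul _
  have hgh : e (g * h)⁻¹ * (e h⁻¹ * (e (g * h)⁻¹ * a)) = e h⁻¹ * (e (g * h)⁻¹ * a) := by
    rw [(P.commute _ _).left_comm, (P.idem _).mul_self_mul]
  calc piAlpha e act g (piAlpha e act h a)
      = act g (piAlpha e act h (e (g * h)⁻¹ * a)) := by
        rw [P.piAlpha_e_mul, mul_inv_rev, mul_inv_cancel_left]; rfl
    _ = act (g * h) (e h⁻¹ * (e (g * h)⁻¹ * a)) := (P.act_act_of_mem hh hgh).2
    _ = piAlpha e act (g * h) (e h⁻¹ * a) := by rw [(P.commute _ _).left_comm]; rfl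
    _ = e g * piAlpha e act (g * h) a := by rw [P.piAlpha_e_mul, mul_inv_cancel_right]

theorem e_mul_piAlpha_mul_of_mem (P : IsUnitalPartialAction e act) {g h : G} {c : A}
    (hc : e h⁻¹ * c = c) : e g * piAlpha e act (g * h) c = piAlpha e act (g * h) c := by
  simpa only [mul_inv_cancel_right, hc] using (P.piAlpha_e_mul (g * h) h⁻¹ c).symm

end IsUnitalPartialAction

theorem piAlpha_isPartialRepresentation_general
    {K : Type*} [CommRing K] {A : Type*} [Ring A] [Algebra K A]
    {G : Type*} [Group G]
    (e : G → A) (act : G → A → A)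
    (he_central : ∀ g a, e g * a = a * e g)
    (he_idem : ∀ g, e g * e g = e g)
    (he_one : e 1 = 1)
    (hact_one : ∀ a, act 1 a = a)
    (hrange : ∀ g a, e g * act g (e g⁻¹ * a) = act g (e g⁻¹ * a))
    (hadd : ∀ g a b, act g (e g⁻¹ * a + e g⁻¹ * b) = act g (e g⁻¹ * a) + act g (e g⁻¹ * b))
    (hsmul : ∀ g (k : K) a, act g (k • (e g⁻¹ * a)) = k • act g (e g⁻¹ * a))
    (hmul : ∀ g a b, act g ((e g⁻¹ * a) * (e g⁻¹ * b)) = act g (e g⁻¹ * a) * act g (e g⁻¹ * b))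
    (hcomp : ∀ g h a, e h⁻¹ * a = a → e g⁻¹ * act h a = act h a →
      e (g * h)⁻¹ * a = a ∧ act g (act h a) = act (g * h) a) :
    (∀ g : G, IsLinearMap K (fun a : A => act g (e g⁻¹ * a))) ∧
    (∀ a : A, act 1 (e 1⁻¹ * a) = a) ∧
    (∀ (g h : G) (a : A),
      act g⁻¹ (e (g⁻¹)⁻¹ * act g (e g⁻¹ * act h (e h⁻¹ * a))) =
        act g⁻¹ (e (g⁻¹)⁻¹ * act (g * h) (e (g * h)⁻¹ * a))) ∧
    (∀ (g h : G) (a : A),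
      act g (e g⁻¹ * act h (e h⁻¹ * act h⁻¹ (e (h⁻¹)⁻¹ * a))) =
        act (g * h) (e (g * h)⁻¹ * act h⁻¹ (e (h⁻¹)⁻¹ * a))) := by
  have P : IsUnitalPartialAction e act :=
    ⟨he_central, he_idem, hact_one, hrange, hmul, hcomp⟩
  refine ⟨fun g => ⟨fun x y => ?_, fun k x => ?_⟩, fun a => ?_, fun g h a => ?_, fun g h a => ?_⟩
  · simpa only [mul_add] using hadd g x y
  · simpa only [mul_smul_comm] using hsmul g k x
  · rw [inv_one, he_one, one_mul, hact_one]
  · rw [inv_inv, hrange]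
    exact congrArg (act g⁻¹) (P.piAlpha_piAlpha g h a)
  · exact (P.piAlpha_piAlpha g h _).trans (P.e_mul_piAlpha_mul_of_mem (hrange h⁻¹ a))

/-- Let `α` be a unital partial action of a group `G` on a unital `K`-algebra `A`, with
ideals `D_g = e_g·A` for central idempotents `e_g` (here `act g` denotes `α_g`, applied
via `a ↦ act g (e g⁻¹ * a)`).  Then `π^α_g(a) = α_g(e_{g⁻¹} a)` defines a partial
representation `G → End_K(A)`: each `π^α_g` is `K`-linear, `π^α_1 = id`,
`π^α_{g⁻¹} π^α_g π^α_h = π^α_{g⁻¹} π^α_{gh}` and `π^α_g π^α_h π^α_{h⁻¹} = π^α_{gh} π^α_{h⁻¹}`. -/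
theorem piAlpha_isPartialRepresentation
    {K : Type*} [CommRing K] {A : Type*} [Ring A] [Algebra K A]
    {G : Type*} [Group G]
    (e : G → A) (act : G → A → A)
    (he_central : ∀ g a, e g * a = a * e g)
    (he_idem : ∀ g, e g * e g = e g)
    (he_one : e 1 = 1)
    (hact_one : ∀ a, act 1 a = a)
    (hrange : ∀ g a, e g * act g (e g⁻¹ * a) = act g (e g⁻¹ * a))
    (hadd : ∀ g a b, act g (e g⁻¹ * a + e g⁻¹ * b) = act g (e g⁻¹ * a) + act g (e g⁻¹ * b))
    (hsmul : ∀ g (k : K) a, act g (k • (e g⁻¹ * a)) = k • act g (e g⁻¹ * a))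
    (hmul : ∀ g a b, act g ((e g⁻¹ * a) * (e g⁻¹ * b)) = act g (e g⁻¹ * a) * act g (e g⁻¹ * b))
    (hbij : ∀ g, Set.BijOn (act g) {x | e g⁻¹ * x = x} {x | e g * x = x})
    (hcomp : ∀ g h a, e h⁻¹ * a = a → e g⁻¹ * act h a = act h a →
      e (g * h)⁻¹ * a = a ∧ act g (act h a) = act (g * h) a) :
    (∀ g : G, IsLinearMap K (fun a : A => act g (e g⁻¹ * a))) ∧
    (∀ a : A, act 1 (e 1⁻¹ * a) = a) ∧
    (∀ (g h : G) (a : A),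
      act g⁻¹ (e (g⁻¹)⁻¹ * act g (e g⁻¹ * act h (e h⁻¹ * a))) =
        act g⁻¹ (e (g⁻¹)⁻¹ * act (g * h) (e (g * h)⁻¹ * a))) ∧
    (∀ (g h : G) (a : A),
      act g (e g⁻¹ * act h (e h⁻¹ * act h⁻¹ (e (h⁻¹)⁻¹ * a))) =
        act (g * h) (e (g * h)⁻¹ * act h⁻¹ (e (h⁻¹)⁻¹ * a))) :=
  piAlpha_isPartialRepresentation_general e act he_central he_idem he_one hact_one hrange hadd hsmul
    hmul hcomp
end

section
/- Let M be a K_par(G)-module and d : G → M a map satisfying e_g·d(gh) = [g]·d(h) + e_{gh}·d(g) for all g,h ∈ G. Then d(1_G) = 0 and d(g) = -[g]·d(g⁻¹), whence d(g) = e_g·d(g) for all g ∈ G. -/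
/-- A concrete model of Exel's inverse monoid `S(G)`: pairs `(E, g)` where `E` is a
finite subset of `G` containing `1` and `g`, with product `(E,g)(F,h) = (E ∪ gF, gh)`. -/
@[ext]
structure ExelS (G : Type*) [Group G] [DecidableEq G] where
  carrier : Finset G
  elt : G
  one_mem : (1 : G) ∈ carrier
  elt_mem : elt ∈ carrier

namespace ExelS

variable {G : Type*} [Group G] [DecidableEq G]

instance : Mul (ExelS G) :=
  ⟨fun s t =>
    ⟨s.carrier ∪ t.carrier.image (s.elt * ·), s.elt * t.elt,
      Finset.mem_union_left _ s.one_mem,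
      Finset.mem_union_right _ (Finset.mem_image_of_mem _ t.elt_mem)⟩⟩

instance : One (ExelS G) :=
  ⟨⟨{1}, 1, Finset.mem_singleton_self 1, Finset.mem_singleton_self 1⟩⟩

/-- The inverse in the inverse monoid `S(G)`. -/
instance : Inv (ExelS G) :=
  ⟨fun s =>
    ⟨s.carrier.image (s.elt⁻¹ * ·), s.elt⁻¹,
      Finset.mem_image.2 ⟨s.elt, s.elt_mem, by simp⟩,
      Finset.mem_image.2 ⟨1, s.one_mem, by simp⟩⟩⟩

@[simp] lemma mul_carrier (s t : ExelS G) :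
    (s * t).carrier = s.carrier ∪ t.carrier.image (s.elt * ·) := rfl

@[simp] lemma mul_elt (s t : ExelS G) : (s * t).elt = s.elt * t.elt := rfl

@[simp] lemma one_carrier : (1 : ExelS G).carrier = {1} := rfl

@[simp] lemma one_elt : (1 : ExelS G).elt = 1 := rfl

@[simp] lemma inv_carrier (s : ExelS G) :
    s⁻¹.carrier = s.carrier.image (s.elt⁻¹ * ·) := rfl

@[simp] lemma inv_elt (s : ExelS G) : s⁻¹.elt = s.elt⁻¹ := rfl

instance : Monoid (ExelS G) where
  mul_assoc a b c := by
    ext x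
    · simp only [mul_carrier, Finset.image_union, Finset.image_image, Finset.union_assoc,
        Finset.mem_union, Finset.mem_image, Function.comp]
      constructor <;> rintro (h | h | ⟨y, hy, rfl⟩) <;> simp_all [mul_assoc]
    · simp [mul_assoc]
  one_mul s := by
    ext x
    · simp only [mul_carrier, one_carrier, one_elt, one_mul, Finset.image_id']
      constructor
      · intro h
        rcases Finset.mem_union.1 h with h | h
        · exact (Finset.mem_singleton.1 h) ▸ s.one_mem
        · exact h
      · exact fun h => Finset.mem_union_right _ h
    · simp
  mul_one s := by
    ext x
    · simp only [mul_carrier, one_carrier, Finset.image_singleton, mul_one]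
      constructor
      · intro h
        rcases Finset.mem_union.1 h with h | h
        · exact h
        · exact (Finset.mem_singleton.1 h) ▸ s.elt_mem
      · exact fun h => Finset.mem_union_left _ h
    · simp

/-- The canonical generators `[g]` of Exel's monoid. -/
def br (g : G) : ExelS G := ⟨{1, g}, g, by simp, by simp⟩

/-- The idempotents `e_g = [g][g⁻¹]`. -/
def eIdem (g : G) : ExelS G := br g * (br g⁻¹ : ExelS G)

end ExelS

/-! Setting `g = h = 1` gives `d 1 = d 1 + d 1`; then `h = g⁻¹` gives `0 = [g] • d g⁻¹ + d g`,
and applying this identity to `g` and to `g⁻¹` yields `d g = [g][g⁻¹] • d g`. -/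

section PartialCocycle

variable {G A M : Type*} [Group G] [Monoid A] [AddCommGroup M] [DistribMulAction A M]

/-- `u g` plays the role of `[g]`, so `u g * u g⁻¹` is `e_g`. -/
def IsPartialCocycle (u : G → A) (d : G → M) : Prop :=
  ∀ g h : G, (u g * u g⁻¹) • d (g * h) = u g • d h + (u (g * h) * u (g * h)⁻¹) • d g

namespace IsPartialCocycle

variable {u : G → A} {d : G → M}

theorem apply_one (hd : IsPartialCocycle u d) (hu : u 1 = 1) : d 1 = 0 := by
  have h := hd 1 1
  simp only [mul_one, inv_one, hu, one_smul] at h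
  exact left_eq_add.mp h

theorem apply_eq_neg_smul_apply_inv (hd : IsPartialCocycle u d) (hu : u 1 = 1) (g : G) :
    d g = -(u g • d g⁻¹) := by
  have h := hd g g⁻¹
  rw [mul_inv_cancel, hd.apply_one hu, smul_zero, inv_one, hu, one_mul, one_smul] at h
  exact eq_neg_of_add_eq_zero_right h.symm

theorem apply_eq_smul_apply (hd : IsPartialCocycle u d) (hu : u 1 = 1) (g : G) :
    d g = (u g * u g⁻¹) • d g := by
  calc d g = -(u g • d g⁻¹) := hd.apply_eq_neg_smul_apply_inv hu g
    _ = -(u g • -(u g⁻¹ • d g⁻¹⁻¹)) := by rw [← hd.apply_eq_neg_smul_apply_inv hu g⁻¹]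
    _ = (u g * u g⁻¹) • d g := by rw [inv_inv, smul_neg, neg_neg, mul_smul]

end IsPartialCocycle

end PartialCocycle

namespace ExelS

variable {G : Type*} [Group G] [DecidableEq G]

@[simp] lemma br_one : (br 1 : ExelS G) = 1 := by
  ext x <;> simp [br]

end ExelS

open ExelS MonoidAlgebra in
/-- Let `M` be a `K_par(G)`-module and `d : G → M` satisfy
`e_g·d(gh) = [g]·d(h) + e_{gh}·d(g)` for all `g, h`.  Then `d(1) = 0`,
`d(g) = -[g]·d(g⁻¹)` and hence `d(g) = e_g·d(g)` for all `g ∈ G`. -/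
theorem partialCocycle_basic_identities
    {G : Type*} [Group G] [DecidableEq G] {K : Type*} [CommRing K]
    {M : Type*} [AddCommGroup M] [Module (MonoidAlgebra K (ExelS G)) M]
    (d : G → M)
    (hd : ∀ g h : G,
      of K (ExelS G) (eIdem g) • d (g * h) =
        of K (ExelS G) (br g) • d h + of K (ExelS G) (eIdem (g * h)) • d g) :
    d 1 = 0 ∧ (∀ g : G, d g = -(of K (ExelS G) (br g) • d g⁻¹)) ∧
      ∀ g : G, d g = of K (ExelS G) (eIdem g) • d g := by
  have of_eIdem (g : G) : of K (ExelS G) (eIdem g) = of K _ (br g) * of K _ (br g⁻¹) := by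
    rw [eIdem, map_mul]
  have hcocycle : IsPartialCocycle (fun g => of K (ExelS G) (br g)) d := fun g h => by
    simpa only [of_eIdem] using hd g h
  have hu : of K (ExelS G) (br 1) = 1 := by rw [br_one, map_one]
  refine ⟨hcocycle.apply_one hu, hcocycle.apply_eq_neg_smul_apply_inv hu, fun g => ?_⟩
  rw [of_eIdem]
  exact hcocycle.apply_eq_smul_apply hu g
end

section
/- In Exel's inverse monoid S(G), every element s satisfies s = (ss⁻¹)[η(s)], where η : S(G) → G is the monoid homomorphism sending e[g] to g. Consequently ss⁻¹ ≤ e_{η(s)} in the natural partial order of idempotents. -/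
namespace ExelS

variable {G : Type*} [Group G] [DecidableEq G]

/-- The monoid homomorphism `η : S(G) → G` sending `e[g]` to `g`. -/
def eta : ExelS G →* G where
  toFun s := s.elt
  map_one' := rfl
  map_mul' _ _ := rfl

end ExelS

/-! Writing `s = (E, g)`, we get `ss⁻¹ = (E, 1)`. Right multiplication by an element with
`η = 1` only enlarges the carrier, so since `1, g ∈ E`, multiplying `(E, 1)` by `[g]` or by
`e_g = ({1, g}, 1)` adds nothing to `E`. -/

namespace ExelS

variable {G : Type*} [Group G] [DecidableEq G]

@[simp] lemma br_carrier (g : G) : (br g).carrier = {1, g} := rfl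

@[simp] lemma br_elt (g : G) : (br g).elt = g := rfl

@[simp] lemma eta_apply (s : ExelS G) : eta s = s.elt := rfl

lemma pair_subset_carrier (s : ExelS G) : {1, s.elt} ⊆ s.carrier :=
  Finset.insert_subset s.one_mem (Finset.singleton_subset_iff.2 s.elt_mem)

@[simp] lemma mul_inv_carrier (s : ExelS G) : (s * s⁻¹).carrier = s.carrier := by
  rw [mul_carrier, inv_carrier, Finset.image_image]
  simp [Function.comp_def]

@[simp] lemma eIdem_carrier (g : G) : (eIdem g).carrier = {1, g} := by
  ext x
  simp [eIdem, or_comm]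

@[simp] lemma eIdem_elt (g : G) : (eIdem g).elt = 1 := mul_inv_cancel g

lemma mul_carrier_eq_left {e t : ExelS G} (he : e.elt = 1) (h : t.carrier ⊆ e.carrier) :
    (e * t).carrier = e.carrier := by
  simpa [he] using h

end ExelS

open ExelS in
/-- Every `s ∈ S(G)` satisfies `s = (ss⁻¹)[η(s)]`; consequently `ss⁻¹ ≤ e_{η(s)}`
in the natural partial order on idempotents (`e ≤ f` iff `ef = e`). -/
theorem exelS_eq_mul_inv_mul_br {G : Type*} [Group G] [DecidableEq G] (s : ExelS G) :
    s = s * s⁻¹ * br (eta s) ∧ (s * s⁻¹) * eIdem (eta s) = s * s⁻¹ := by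
  have hunit : (s * s⁻¹).elt = 1 := mul_inv_cancel s.elt
  have hpair : {1, s.elt} ⊆ (s * s⁻¹).carrier := s.mul_inv_carrier ▸ s.pair_subset_carrier
  constructor
  · ext1
    · rw [mul_carrier_eq_left hunit hpair, mul_inv_carrier]
    · simp
  · ext1
    · exact mul_carrier_eq_left hunit (by simpa using hpair)
    · simp [hunit]
end

section
/- With the notation of the projective resolution P_• of B, the K-linear maps σ_{−1}(e) = e(), σ₀(s()) = ss⁻¹(η(s)), σ_n(s(g₁,…,g_n)) = ss⁻¹(η(s),g₁,…,g_n) form a contracting homotopy: ∂₀∘σ_{−1} = id_B and ∂_{n+1}∘σ_n + σ_{n−1}∘∂_n = id_{P_n} for all n ≥ 0. -/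
namespace ExelS

variable {G : Type*} [Group G] [DecidableEq G]

/-- The idempotent `e_{(g₁,…,g_n)} = e_{g₁} e_{g₁g₂} ⋯ e_{g₁⋯g_n}` of `S(G)`. -/
def eTuple {n : ℕ} (g : Fin n → G) : ExelS G :=
  (List.ofFn fun i : Fin n => eIdem (Fin.partialProd g i.succ)).prod

lemma elt_eq_one_of_idem {e : ExelS G} (he : e * e = e) : e.elt = 1 := by
  have h : e.elt * e.elt = e.elt := congrArg ExelS.elt he
  exact mul_eq_right.mp h

lemma idem_of_elt_eq_one {s : ExelS G} (h : s.elt = 1) : s * s = s := by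
  ext x
  · simp [h]
  · simp [h]

lemma mul_inv_rev' (s t : ExelS G) : (s * t)⁻¹ = t⁻¹ * s⁻¹ := by
  ext x
  · simp only [inv_carrier, mul_carrier, inv_elt, mul_elt, Finset.image_union,
      Finset.image_image, Finset.mem_union, Finset.mem_image, Function.comp]
    constructor
    · rintro (⟨y, hy, rfl⟩ | ⟨y, hy, rfl⟩)
      · right; exact ⟨y, hy, by group⟩
      · left; exact ⟨y, hy, by group⟩
    · rintro (⟨y, hy, rfl⟩ | ⟨y, hy, rfl⟩)
      · right; exact ⟨y, hy, by group⟩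
      · left; exact ⟨y, hy, by group⟩
  · simp [mul_inv_rev]

/-- The idempotents of `S(G)`. -/
def Idem (G : Type*) [Group G] [DecidableEq G] : Type _ := {e : ExelS G // e * e = e}

/-- Conjugation of idempotents: `s · e = s e s⁻¹`. -/
def conjIdem (s : ExelS G) (e : Idem G) : Idem G :=
  ⟨s * e.1 * s⁻¹, idem_of_elt_eq_one (by
    simp [mul_elt, inv_elt, elt_eq_one_of_idem e.2])⟩

lemma conjIdem_one : conjIdem (1 : ExelS G) = id := by
  funext e
  apply Subtype.ext
  show (1 : ExelS G) * e.1 * (1 : ExelS G)⁻¹ = e.1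
  have h1 : ((1 : ExelS G))⁻¹ = 1 := by ext x <;> simp
  rw [h1, one_mul, mul_one]

lemma conjIdem_mul (s t : ExelS G) :
    conjIdem (s * t) = conjIdem s ∘ conjIdem t := by
  funext e
  apply Subtype.ext
  show (s * t) * e.1 * (s * t)⁻¹ = s * (t * e.1 * t⁻¹) * s⁻¹
  rw [mul_inv_rev']
  simp [mul_assoc]

end ExelS

noncomputable section

open ExelS MonoidAlgebra DirectSum

variable (K : Type*) [CommRing K] (G : Type*) [Group G] [DecidableEq G]

/-- `B = K·E(S(G))`, the `K`-span of the idempotents of `S(G)`. -/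
def Bmod : Type _ := Idem G →₀ K

instance : AddCommGroup (Bmod K G) := by unfold Bmod; infer_instance
instance : Module K (Bmod K G) := by unfold Bmod; infer_instance

/-- The conjugation representation of `S(G)` on `B`. -/
def rhoB : ExelS G →* Module.End K (Bmod K G) where
  toFun s := Finsupp.lmapDomain K K (conjIdem s)
  map_one' := by
    show Finsupp.lmapDomain K K (conjIdem (1 : ExelS G)) = 1
    rw [conjIdem_one, Finsupp.lmapDomain_id]
    rfl
  map_mul' s t := by
    show Finsupp.lmapDomain K K (conjIdem (s * t)) = _
    rw [conjIdem_mul]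
    exact (Finsupp.lmapDomain_comp K K (conjIdem t) (conjIdem s) : _)

/-- The `K_par(G)`-module structure on `B` induced by `s·e = ses⁻¹`. -/
instance : Module (MonoidAlgebra K (ExelS G)) (Bmod K G) :=
  Module.compHom _ ((MonoidAlgebra.lift K (Module.End K (Bmod K G)) (ExelS G)) (rhoB K G)).toRingHom

/-- The `n`-th term `P_n = ⊕_{g₁,…,g_n ∈ G} K_par(G)·e_{(g₁,…,g_n)}` of the resolution. -/
def Pmod (n : ℕ) : Type _ :=
  ⨁ (v : Fin n → G), ↥(LinearMap.range (LinearMap.toSpanSingleton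
    (MonoidAlgebra K (ExelS G)) (MonoidAlgebra K (ExelS G)) (of K (ExelS G) (eTuple v))))

instance (n : ℕ) : AddCommGroup (Pmod K G n) := by unfold Pmod; infer_instance
instance (n : ℕ) : Module (MonoidAlgebra K (ExelS G)) (Pmod K G n) := by
  unfold Pmod; infer_instance
instance (n : ℕ) : Module K (Pmod K G n) := by unfold Pmod; infer_instance

/-- The augmentation `∂₀ : P₀ → B`, `s() ↦ ss⁻¹` (i.e. `x ↦ x • (1 ∈ E(S(G)))`). -/
def bdry0 : Pmod K G 0 →ₗ[MonoidAlgebra K (ExelS G)] Bmod K G :=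
  DirectSum.toModule _ _ _ fun _v =>
    (LinearMap.toSpanSingleton (MonoidAlgebra K (ExelS G)) (Bmod K G)
      (Finsupp.single ⟨1, one_mul 1⟩ 1)).comp (Submodule.subtype _)

/-- The target element `[g₁](g₂,…,g_{n+1}) + Σ_{i=1}^{n}(−1)^i(…glued…) +
(−1)^{n+1}(g₁,…,g_n)` of `P_n` associated to the basis element of index
`(g₁,…,g_{n+1})` in `P_{n+1}`.  (The summand `j = n` of the sum below is the last term.) -/
def bdryTarget (n : ℕ) (v : Fin (n + 1) → G) : Pmod K G n :=
  (DirectSum.lof (MonoidAlgebra K (ExelS G)) _ _ (Fin.tail v)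
      ⟨of K (ExelS G) (br (v 0)) * of K (ExelS G) (eTuple (Fin.tail v)),
        ⟨of K (ExelS G) (br (v 0)), by simp [LinearMap.toSpanSingleton_apply, smul_eq_mul]⟩⟩ :
          Pmod K G n) +
    ∑ j : Fin (n + 1), (-1 : ℤ) ^ ((j : ℕ) + 1) •
      (DirectSum.lof (MonoidAlgebra K (ExelS G)) _ _ (Fin.contractNth j (· * ·) v)
        ⟨of K (ExelS G) (eTuple (Fin.contractNth j (· * ·) v)),
          ⟨1, by simp [LinearMap.toSpanSingleton_apply]⟩⟩ : Pmod K G n)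

/-- The boundary maps `∂_{n+1} : P_{n+1} → P_n` of the resolution. -/
def bdry (n : ℕ) : Pmod K G (n + 1) →ₗ[MonoidAlgebra K (ExelS G)] Pmod K G n :=
  DirectSum.toModule _ _ _ fun v =>
    (LinearMap.toSpanSingleton (MonoidAlgebra K (ExelS G)) (Pmod K G n)
      (bdryTarget K G n v)).comp (Submodule.subtype _)

end

noncomputable section

open ExelS MonoidAlgebra DirectSum

variable (K : Type*) [CommRing K] (G : Type*) [Group G] [DecidableEq G]

/-- The contracting homotopy `σ₋₁ : B → P₀`, `e ↦ e()`. -/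
def sigmaNeg : Bmod K G →ₗ[K] Pmod K G 0 :=
  Finsupp.lift (Pmod K G 0) K (Idem G) fun e =>
    DirectSum.lof (MonoidAlgebra K (ExelS G)) _ _ (Fin.elim0 : Fin 0 → G)
      ⟨of K (ExelS G) e.1 * of K (ExelS G) (eTuple (Fin.elim0 : Fin 0 → G)),
        ⟨of K (ExelS G) e.1, by simp [LinearMap.toSpanSingleton_apply, smul_eq_mul]⟩⟩

/-- The value of `σ_n` on the basis element `t(g₁,…,g_n)`:
`σ_n(t(g₁,…,g_n)) = tt⁻¹(η(t),g₁,…,g_n)`. -/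
def sigmaF (n : ℕ) (v : Fin n → G) : ExelS G → Pmod K G (n + 1) := fun t =>
  DirectSum.lof (MonoidAlgebra K (ExelS G)) _ _ (Fin.cons t.elt v)
    ⟨of K (ExelS G) (t * t⁻¹) * of K (ExelS G) (eTuple (Fin.cons t.elt v)),
      ⟨of K (ExelS G) (t * t⁻¹), by simp [LinearMap.toSpanSingleton_apply, smul_eq_mul]⟩⟩

/-- The contracting homotopy `σ_n : P_n → P_{n+1}` (a `K`-linear map). -/
def sigmaMap (n : ℕ) : Pmod K G n →ₗ[K] Pmod K G (n + 1) :=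
  DirectSum.toModule K _ _ fun v =>
    (Finsupp.lift (Pmod K G (n + 1)) K (ExelS G) (sigmaF K G n v)).comp
      ((coeffLinearEquiv K).toLinearMap.comp ((Submodule.subtype _).restrictScalars K))

end

/-!
In the model of `S(G)`, an idempotent `f = (F, 1)` satisfies `t f = t` exactly when
`η(t) F ⊆ t.carrier`, and `e_{(g₁,…,g_n)}` has as carrier the partial products `g₁⋯g_i`.
So every identity in `S(G)` that the homotopy needs is the membership of a partial product
in a carrier.

It suffices to check the identities on the `K`-spanning elements `t(v)` with `t e_v = t`.
Put `c = (η(t), v)`. Since `tt⁻¹[η(t)] = t`, we get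
`∂σ(t(v)) = t(v) + Σⱼ (-1)^{j+1} tt⁻¹(d_j c)`, where `d_j` multiplies the entries `j` and
`j + 1`. On the other side `σ` sends the term `t[g₁](g₂,…)` of `∂(t(v))` to `tt⁻¹(d₀ c)` and
the face `t(d_j v)` to `tt⁻¹(d_{j+1} c)`, so `σ∂(t(v))` is the same sum with the opposite
sign (in degree `0`, `σ₋₁∂₀` supplies `tt⁻¹(d₀ c)`).
-/

namespace Fin

variable {α : Type*} {n : ℕ}

lemma contractNth_zero_cons (op : α → α → α) (a : α) (v : Fin (n + 1) → α) :
    Fin.contractNth 0 op (Fin.cons a v) = Fin.cons (op a (v 0)) (Fin.tail v) := by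
  ext k
  cases k using Fin.cases <;> simp [Fin.contractNth, Fin.tail]

lemma contractNth_succ_cons (op : α → α → α) (j : Fin (n + 1)) (a : α)
    (v : Fin (n + 1) → α) :
    Fin.contractNth j.succ op (Fin.cons a v) = Fin.cons a (Fin.contractNth j op v) := by
  ext k
  cases k using Fin.cases <;> simp [Fin.contractNth]

end Fin

namespace ExelS

variable {G : Type*} [Group G] [DecidableEq G]

lemma mul_eq_left_iff {s f : ExelS G} :
    s * f = s ↔ f.carrier.image (s.elt * ·) ⊆ s.carrier ∧ f.elt = 1 := by
  rw [ExelS.ext_iff, mul_carrier, mul_elt, Finset.union_eq_left, mul_eq_left]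

lemma mul_inv_eq (s : ExelS G) : s * s⁻¹ = ⟨s.carrier, 1, s.one_mem, s.one_mem⟩ := by
  ext x <;> simp

lemma conjIdem_one_eq_self (e : Idem G) : conjIdem e.1 ⟨1, one_mul 1⟩ = e := by
  refine Subtype.ext ?_
  change e.1 * 1 * e.1⁻¹ = e.1
  rw [mul_one, mul_inv_eq]
  exact ExelS.ext rfl (elt_eq_one_of_idem e.2).symm

lemma mul_inv_mul_br (t : ExelS G) : t * t⁻¹ * br t.elt = t := by
  ext x
  · simp [mul_inv_eq, br, t.one_mem, t.elt_mem]
  · simp [br]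

lemma mul_br_mul_inv {t : ExelS G} {g : G} (h : t.elt * g ∈ t.carrier) :
    t * br g * (t * br g)⁻¹ = t * t⁻¹ := by
  have hcarrier : (t * br g).carrier = t.carrier := by
    simp [br, t.elt_mem, h]
  rw [mul_inv_eq, mul_inv_eq]
  ext x <;> simp [hcarrier]

lemma elt_list_prod_eq_one {l : List (ExelS G)} (h : ∀ s ∈ l, s.elt = 1) : l.prod.elt = 1 := by
  induction l <;> simp_all

lemma mem_carrier_list_prod {l : List (ExelS G)} (h : ∀ s ∈ l, s.elt = 1) {x : G} :
    x ∈ l.prod.carrier ↔ x = 1 ∨ ∃ s ∈ l, x ∈ s.carrier := by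
  induction l with
  | nil => simp
  | cons a l ih => simp_all [or_left_comm]

lemma eIdem_eq (g : G) : eIdem g = ⟨{1, g}, 1, by simp, by simp⟩ := by
  ext x
  · simp [eIdem, br, or_comm]
  · simp [eIdem, br]

lemma elt_eTuple {n : ℕ} (v : Fin n → G) : (eTuple v).elt = 1 :=
  elt_list_prod_eq_one (by simp [eIdem_eq])

lemma carrier_eTuple {n : ℕ} (v : Fin n → G) :
    (eTuple v).carrier = Finset.univ.image (Fin.partialProd v) := by
  ext x
  rw [eTuple, mem_carrier_list_prod (by simp [eIdem_eq])]
  simp only [List.mem_ofFn, exists_exists_eq_and, eIdem_eq, Finset.mem_insert,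
    Finset.mem_singleton, Finset.mem_image, Finset.mem_univ, true_and, Fin.exists_fin_succ,
    Fin.partialProd_zero]
  grind

lemma eTuple_mul_eTuple {n : ℕ} (v : Fin n → G) : eTuple v * eTuple v = eTuple v :=
  idem_of_elt_eq_one (elt_eTuple v)

lemma mul_eTuple_eq_self_iff {t : ExelS G} {n : ℕ} {v : Fin n → G} :
    t * eTuple v = t ↔ ∀ i, t.elt * Fin.partialProd v i ∈ t.carrier := by
  rw [mul_eq_left_iff, elt_eTuple, carrier_eTuple, Finset.image_image, Finset.image_subset_iff]
  simp

variable {t : ExelS G} {n : ℕ}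

lemma mul_inv_mul_eTuple_cons {v : Fin n → G} (ht : t * eTuple v = t) :
    t * t⁻¹ * eTuple (Fin.cons t.elt v) = t * t⁻¹ := by
  rw [mul_eTuple_eq_self_iff] at ht ⊢
  intro i
  cases i using Fin.cases
  · simp [mul_inv_eq, t.one_mem]
  · simpa [mul_inv_eq, Fin.partialProd_succ'] using ht _

lemma mul_eTuple_contractNth {v : Fin (n + 1) → G} (ht : t * eTuple v = t) (j : Fin (n + 1)) :
    t * eTuple (Fin.contractNth j (· * ·) v) = t := by
  rw [mul_eTuple_eq_self_iff] at ht ⊢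
  intro i
  rw [Fin.partialProd_contractNth]
  exact ht _

lemma mul_br_mul_eTuple_tail {v : Fin (n + 1) → G} (ht : t * eTuple v = t) :
    t * br (v 0) * eTuple (Fin.tail v) = t * br (v 0) := by
  rw [mul_eTuple_eq_self_iff] at ht ⊢
  intro i
  simp [br, mul_assoc, ← Fin.partialProd_succ', ht i.succ]

lemma mul_br_zero_mul_inv {v : Fin (n + 1) → G} (ht : t * eTuple v = t) :
    t * br (v 0) * (t * br (v 0))⁻¹ = t * t⁻¹ :=
  mul_br_mul_inv <| by
    simpa only [Fin.partialProd_succ', Fin.partialProd_zero, mul_one]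
      using mul_eTuple_eq_self_iff.1 ht (Fin.succ 0)

end ExelS

noncomputable section

open ExelS MonoidAlgebra DirectSum

variable {K : Type*} [CommRing K] {G : Type*} [Group G] [DecidableEq G]

local notation "𝒜" => MonoidAlgebra K (ExelS G)

instance : IsScalarTower K 𝒜 (Bmod K G) :=
  ⟨fun k x b => by
    change (MonoidAlgebra.lift K (Module.End K (Bmod K G)) (ExelS G) (rhoB K G)) (k • x) b = _
    rw [map_smul]
    rfl⟩

instance (n : ℕ) : IsScalarTower K 𝒜 (Pmod K G n) := by
  unfold Pmod; infer_instance

variable (K) in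
/-- `Pmod.single K v x` is the element `x(v)` of the paper, i.e. `x e_v` in the summand `v`. -/
def Pmod.single {n : ℕ} (v : Fin n → G) : 𝒜 →ₗ[𝒜] Pmod K G n :=
  DirectSum.lof 𝒜 (Fin n → G) _ v ∘ₗ
    (LinearMap.toSpanSingleton 𝒜 𝒜 (of K (ExelS G) (eTuple v))).rangeRestrict

namespace Pmod

variable {n : ℕ}

lemma single_apply (v : Fin n → G) (x : 𝒜) :
    single K v x = DirectSum.lof 𝒜 (Fin n → G)
      (fun w => LinearMap.range (LinearMap.toSpanSingleton 𝒜 𝒜 (of K _ (eTuple w)))) v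
        ⟨x * of K _ (eTuple v), x, rfl⟩ :=
  rfl

lemma smul_single (v : Fin n → G) (x y : 𝒜) : x • single K v y = single K v (x * y) := by
  rw [← map_smul, smul_eq_mul]

lemma single_mul_eTuple (v : Fin n → G) (x : 𝒜) :
    single K v (x * of K _ (eTuple v)) = single K v x := by
  refine congrArg (DirectSum.lof 𝒜 _ _ v) (Subtype.ext ?_)
  simp only [LinearMap.codRestrict_apply, LinearMap.toSpanSingleton_apply, smul_eq_mul, mul_assoc,
    ← map_mul, eTuple_mul_eTuple]

lemma ext_single {M : Type*} [AddCommGroup M] [Module K M] {f g : Pmod K G n →ₗ[K] M}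
    (h : ∀ (v : Fin n → G) (t : ExelS G), t * eTuple v = t →
      f (single K v (of K _ t)) = g (single K v (of K _ t))) : f = g := by
  refine DirectSum.linearMap_ext K fun v => LinearMap.ext fun y => ?_
  obtain ⟨a, rfl⟩ := LinearMap.surjective_rangeRestrict _ y
  change f (single K v a) = g (single K v a)
  induction a using MonoidAlgebra.induction_on with
  | of s =>
    rw [← single_mul_eTuple, ← map_mul]
    exact h _ _ (by rw [mul_assoc, eTuple_mul_eTuple])
  | add a b ha hb => simp only [map_add, ha, hb]
  | smul k a ha => simp only [LinearMap.map_smul_of_tower, ha]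

end Pmod

lemma sigmaNeg_single (e : Idem G) (k : K) :
    sigmaNeg K G (Finsupp.single e k) = k • Pmod.single K Fin.elim0 (of K _ e.1) :=
  (Finsupp.lift_apply _ _ _ _ _).trans (Finsupp.sum_single_index (zero_smul K _))

lemma bdry0_single_of (v : Fin 0 → G) (t : ExelS G) :
    bdry0 K G (Pmod.single K v (of K _ t)) = Finsupp.single (conjIdem t ⟨1, one_mul 1⟩) 1 := by
  rw [Pmod.single_apply]
  unfold bdry0
  erw [DirectSum.toModule_lof]
  change lift K (Module.End K (Bmod K G)) (ExelS G) (rhoB K G) (of K _ t * of K _ (eTuple v))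
    (Finsupp.single ⟨1, one_mul 1⟩ 1) = _
  rw [show eTuple v = 1 from rfl, map_one, mul_one, lift_of]
  exact Finsupp.mapDomain_single

lemma bdryTarget_eq {n : ℕ} (v : Fin (n + 1) → G) :
    bdryTarget K G n v = Pmod.single K (Fin.tail v) (of K _ (br (v 0))) +
      ∑ j : Fin (n + 1), (-1 : ℤ) ^ ((j : ℕ) + 1) •
        Pmod.single K (Fin.contractNth j (· * ·) v) 1 := by
  unfold bdryTarget
  simp only [Pmod.single_apply, one_mul]
  rfl

lemma bdry_single {n : ℕ} (v : Fin (n + 1) → G) (x : 𝒜) :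
    bdry K G n (Pmod.single K v x) = (x * of K _ (eTuple v)) • bdryTarget K G n v := by
  rw [Pmod.single_apply]
  unfold bdry
  erw [DirectSum.toModule_lof]
  rfl

lemma bdry_single_of {n : ℕ} {v : Fin (n + 1) → G} {t : ExelS G} (ht : t * eTuple v = t) :
    bdry K G n (Pmod.single K v (of K _ t)) =
      Pmod.single K (Fin.tail v) (of K _ (t * br (v 0))) +
      ∑ j : Fin (n + 1), (-1 : ℤ) ^ ((j : ℕ) + 1) •
        Pmod.single K (Fin.contractNth j (· * ·) v) (of K _ t) := by
  rw [bdry_single, ← map_mul, ht, bdryTarget_eq, smul_add, Finset.smul_sum, Pmod.smul_single,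
    ← map_mul]
  congr 1
  refine Finset.sum_congr rfl fun j _ => ?_
  rw [smul_comm, Pmod.smul_single, mul_one]

lemma sigmaMap_single_of {n : ℕ} {v : Fin n → G} {t : ExelS G} (ht : t * eTuple v = t) :
    sigmaMap K G n (Pmod.single K v (of K _ t)) =
      Pmod.single K (Fin.cons t.elt v) (of K _ (t * t⁻¹)) := by
  rw [Pmod.single_apply, DirectSum.lof_eq_of, ← DirectSum.lof_eq_of K]
  unfold sigmaMap
  erw [DirectSum.toModule_lof]
  change Finsupp.lift (Pmod K G (n + 1)) K (ExelS G) (sigmaF K G n v)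
    (of K _ t * of K _ (eTuple v)).coeff = _
  rw [← map_mul, ht, Finsupp.lift_apply, of_apply, coeff_single,
    Finsupp.sum_single_index (zero_smul K (sigmaF K G n v t)), one_smul]
  rfl

lemma bdry_sigmaMap_single_of {n : ℕ} {v : Fin n → G} {t : ExelS G} (ht : t * eTuple v = t) :
    bdry K G n (sigmaMap K G n (Pmod.single K v (of K _ t))) = Pmod.single K v (of K _ t) +
      ∑ j : Fin (n + 1), (-1 : ℤ) ^ ((j : ℕ) + 1) •
        Pmod.single K (Fin.contractNth j (· * ·) (Fin.cons t.elt v)) (of K _ (t * t⁻¹)) := by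
  rw [sigmaMap_single_of ht, bdry_single_of (mul_inv_mul_eTuple_cons ht), Fin.tail_cons,
    Fin.cons_zero, mul_inv_mul_br]

lemma sigmaMap_bdry_single_of {n : ℕ} {v : Fin (n + 1) → G} {t : ExelS G}
    (ht : t * eTuple v = t) :
    sigmaMap K G n (bdry K G n (Pmod.single K v (of K _ t))) =
      Pmod.single K (Fin.contractNth 0 (· * ·) (Fin.cons t.elt v)) (of K _ (t * t⁻¹)) +
      ∑ j : Fin (n + 1), (-1 : ℤ) ^ ((j : ℕ) + 1) •
        Pmod.single K (Fin.contractNth j.succ (· * ·) (Fin.cons t.elt v)) (of K _ (t * t⁻¹)) := by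
  rw [bdry_single_of ht, map_add, map_sum, sigmaMap_single_of (mul_br_mul_eTuple_tail ht),
    mul_br_zero_mul_inv ht, Fin.contractNth_zero_cons]
  congr 1
  refine Finset.sum_congr rfl fun j _ => ?_
  rw [map_zsmul, sigmaMap_single_of (mul_eTuple_contractNth ht j), Fin.contractNth_succ_cons]

lemma sigmaNeg_bdry0_single_of (v : Fin 0 → G) (t : ExelS G) :
    sigmaNeg K G (bdry0 K G (Pmod.single K v (of K _ t))) =
      Pmod.single K (Fin.contractNth 0 (· * ·) (Fin.cons t.elt v)) (of K _ (t * t⁻¹)) := by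
  rw [bdry0_single_of, sigmaNeg_single, one_smul,
    Subsingleton.elim Fin.elim0 (Fin.contractNth 0 (· * ·) (Fin.cons t.elt v))]
  change Pmod.single K _ (of K _ (t * 1 * t⁻¹)) = _
  rw [mul_one]

variable (K G)

lemma bdry0_comp_sigmaNeg : (bdry0 K G).restrictScalars K ∘ₗ sigmaNeg K G = LinearMap.id := by
  refine Finsupp.lhom_ext fun e k => ?_
  change bdry0 K G (sigmaNeg K G (Finsupp.single e k)) = Finsupp.single e k
  rw [sigmaNeg_single, LinearMap.map_smul_of_tower, bdry0_single_of, conjIdem_one_eq_self]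
  exact Finsupp.smul_single_one e k

lemma bdry_comp_sigmaMap_add_sigmaNeg_comp_bdry0 :
    (bdry K G 0).restrictScalars K ∘ₗ sigmaMap K G 0 +
      sigmaNeg K G ∘ₗ (bdry0 K G).restrictScalars K = LinearMap.id := by
  refine Pmod.ext_single fun v t ht => ?_
  simp only [LinearMap.add_apply, LinearMap.comp_apply, LinearMap.restrictScalars_apply,
    LinearMap.id_apply]
  rw [bdry_sigmaMap_single_of ht, sigmaNeg_bdry0_single_of, Fin.sum_univ_one]
  simp

lemma bdry_comp_sigmaMap_add_sigmaMap_comp_bdry (n : ℕ) :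
    (bdry K G (n + 1)).restrictScalars K ∘ₗ sigmaMap K G (n + 1) +
      sigmaMap K G n ∘ₗ (bdry K G n).restrictScalars K = LinearMap.id := by
  refine Pmod.ext_single fun v t ht => ?_
  simp only [LinearMap.add_apply, LinearMap.comp_apply, LinearMap.restrictScalars_apply,
    LinearMap.id_apply]
  rw [bdry_sigmaMap_single_of ht, sigmaMap_bdry_single_of ht, Fin.sum_univ_succ]
  simp only [Fin.val_zero, Fin.val_succ, zero_add, pow_succ, mul_neg_one, neg_smul,
    Finset.sum_neg_distrib]
  abel

/-- The maps `σ_{-1}, σ_n` form a contracting homotopy for the complex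
`⋯ → P₁ → P₀ → B → 0`: `∂₀ ∘ σ₋₁ = id_B` and `∂_{n+1} ∘ σ_n + σ_{n−1} ∘ ∂_n = id_{P_n}`
for all `n ≥ 0`. -/
theorem sigma_is_contracting_homotopy :
    (∀ b : Bmod K G, bdry0 K G (sigmaNeg K G b) = b) ∧
    (∀ x : Pmod K G 0, bdry K G 0 (sigmaMap K G 0 x) + sigmaNeg K G (bdry0 K G x) = x) ∧
    (∀ (n : ℕ) (x : Pmod K G (n + 1)),
      bdry K G (n + 1) (sigmaMap K G (n + 1) x) + sigmaMap K G n (bdry K G n x) = x) :=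
  ⟨LinearMap.congr_fun (bdry0_comp_sigmaNeg K G),
    LinearMap.congr_fun (bdry_comp_sigmaMap_add_sigmaNeg_comp_bdry0 K G),
    fun n => LinearMap.congr_fun (bdry_comp_sigmaMap_add_sigmaMap_comp_bdry K G n)⟩

end
end

section
/- Let M be a K_par(G)-module. Then Hom_{K_par(G)}(P_n, M) is isomorphic as a K-module to C^n_par(G,M) := {f : G^n → M | f(g₁,…,g_n) ∈ e_{(g₁,…,g_n)}·M}, via φ ↦ f_φ with f_φ(g₁,…,g_n) = φ(e_{(g₁,…,g_n)}(g₁,…,g_n)), with inverse sending f to φ_f(s(g₁,…,g_n)) = s·f(g₁,…,g_n). -/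
noncomputable section

open ExelS MonoidAlgebra DirectSum

variable (K : Type*) [CommRing K] (G : Type*) [Group G] [DecidableEq G]

variable {M : Type*} [AddCommGroup M] [Module (MonoidAlgebra K (ExelS G)) M]
  [Module K M] [IsScalarTower K (MonoidAlgebra K (ExelS G)) M]
  [SMulCommClass K (MonoidAlgebra K (ExelS G)) M]
  [SMulCommClass (MonoidAlgebra K (ExelS G)) K M]

variable (M) in
/-- The group `C^n_par(G,M)` of partial `n`-cochains: functions `f : Gⁿ → M` with
`f(g₁,…,g_n) ∈ e_{(g₁,…,g_n)}·M`. -/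
def Cpar (n : ℕ) : Submodule K ((Fin n → G) → M) where
  carrier := {f | ∀ v : Fin n → G, of K (ExelS G) (eTuple v) • f v = f v}
  add_mem' := by
    intro f1 f2 h1 h2 v
    simp only [Pi.add_apply, smul_add, h1 v, h2 v]
  zero_mem' := by intro v; simp
  smul_mem' := by
    intro k f hf v
    simp only [Pi.smul_apply]
    rw [smul_comm, hf v]

section IdempotentIdeal

variable {ι R A N : Type*} [Semiring R] [Semiring A] [AddCommMonoid N] [Module A N] [Module R N]
  [SMulCommClass A R N]

variable (R N) in
/-- `∏ i, e i • N` for idempotents `e i`, whose factors are the `e i`-fixed elements. -/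
def piFixedBy (e : ι → A) : Submodule R (ι → N) where
  carrier := {f | ∀ i, e i • f i = f i}
  add_mem' hf hg i := by simp only [Pi.add_apply, smul_add, hf i, hg i]
  zero_mem' _ := smul_zero _
  smul_mem' c f hf i := by simp only [Pi.smul_apply]; rw [smul_comm, hf i]

lemma mem_range_toSpanSingleton_self (e : A) :
    e ∈ LinearMap.range (LinearMap.toSpanSingleton A A e) :=
  ⟨1, one_smul A e⟩

namespace IsIdempotentElem

lemma mul_eq_self_of_mem_range_toSpanSingleton {e x : A} (he : IsIdempotentElem e)
    (hx : x ∈ LinearMap.range (LinearMap.toSpanSingleton A A e)) : x * e = x := by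
  obtain ⟨c, rfl⟩ := hx
  simp only [LinearMap.toSpanSingleton_apply, smul_eq_mul, mul_assoc, he.eq]

lemma map_range_toSpanSingleton_eq_smul {e : A} (he : IsIdempotentElem e)
    (φ : LinearMap.range (LinearMap.toSpanSingleton A A e) →ₗ[A] N)
    (x : LinearMap.range (LinearMap.toSpanSingleton A A e)) :
    φ x = (x : A) • φ ⟨e, mem_range_toSpanSingleton_self e⟩ := by
  rw [← map_smul]
  exact congrArg φ (Subtype.ext (he.mul_eq_self_of_mem_range_toSpanSingleton x.2).symm)

variable [DecidableEq ι]

lemma map_lof_eq_smul {e : ι → A} (he : ∀ i, IsIdempotentElem (e i))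
    (φ : (⨁ i, LinearMap.range (LinearMap.toSpanSingleton A A (e i))) →ₗ[A] N) (i : ι)
    (x : LinearMap.range (LinearMap.toSpanSingleton A A (e i))) :
    φ (lof A ι _ i x) = (x : A) • φ (lof A ι _ i ⟨e i, mem_range_toSpanSingleton_self (e i)⟩) :=
  (he i).map_range_toSpanSingleton_eq_smul
    (φ.comp (lof A ι (fun i => LinearMap.range (LinearMap.toSpanSingleton A A (e i))) i)) x

variable (R) in
def homDirectSumEquivPiFixedBy {e : ι → A} (he : ∀ i, IsIdempotentElem (e i)) :
    ((⨁ i, LinearMap.range (LinearMap.toSpanSingleton A A (e i))) →ₗ[A] N) ≃ₗ[R]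
      piFixedBy R N e where
  toFun φ := ⟨fun i => φ (lof A ι _ i ⟨e i, mem_range_toSpanSingleton_self (e i)⟩),
    fun i => (map_lof_eq_smul he φ i ⟨e i, mem_range_toSpanSingleton_self (e i)⟩).symm⟩
  invFun f := toModule A ι N fun i =>
    (LinearMap.toSpanSingleton A N ((f : ι → N) i)).comp (Submodule.subtype _)
  map_add' _ _ := rfl
  map_smul' _ _ := rfl
  left_inv φ := by
    refine DirectSum.linearMap_ext A fun i => LinearMap.ext fun x => ?_
    simp only [LinearMap.comp_apply, toModule_lof]
    exact (map_lof_eq_smul he φ i x).symm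
  right_inv f := Subtype.ext <| funext fun i => (toModule_lof A i _).trans (f.2 i)

lemma homDirectSumEquivPiFixedBy_symm_apply_lof {e : ι → A}
    (he : ∀ i, IsIdempotentElem (e i)) (f : piFixedBy R N e) (i : ι)
    (x : LinearMap.range (LinearMap.toSpanSingleton A A (e i))) :
    (homDirectSumEquivPiFixedBy R he).symm f (lof A ι _ i x) = (x : A) • (f : ι → N) i :=
  toModule_lof A (M := fun i => LinearMap.range (LinearMap.toSpanSingleton A A (e i))) i x

end IsIdempotentElem

end IdempotentIdeal

namespace ExelS

variable {G}

def eltHom : ExelS G →* G where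
  toFun := elt
  map_one' := rfl
  map_mul' _ _ := rfl

lemma isIdempotentElem_of_elt_eq_one {s : ExelS G} (h : s.elt = 1) : IsIdempotentElem s := by
  ext x <;> simp [h]

lemma eTuple_elt {n : ℕ} (g : Fin n → G) : (eTuple g).elt = 1 := by
  change eltHom (eTuple g) = 1
  rw [eTuple, map_list_prod]
  refine List.prod_eq_one fun x hx => ?_
  simp only [List.mem_map, List.mem_ofFn] at hx
  obtain ⟨_, ⟨i, rfl⟩, rfl⟩ := hx
  simp [eltHom, eIdem, br]

lemma isIdempotentElem_eTuple {n : ℕ} (g : Fin n → G) : IsIdempotentElem (eTuple g) :=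
  isIdempotentElem_of_elt_eq_one (eTuple_elt g)

end ExelS

/-- `Hom_{K_par(G)}(P_n, M) ≅ C^n_par(G,M)` as `K`-modules, via
`φ ↦ (f_φ : (g₁,…,g_n) ↦ φ(e_{(g₁,…,g_n)}(g₁,…,g_n)))`, with inverse determined by
`φ_f(s(g₁,…,g_n)) = s·f(g₁,…,g_n)`. -/
theorem hom_Pmod_linearEquiv_Cpar (n : ℕ) :
    ∃ L : (Pmod K G n →ₗ[MonoidAlgebra K (ExelS G)] M) ≃ₗ[K] Cpar K G M n,
      (∀ (φ : Pmod K G n →ₗ[MonoidAlgebra K (ExelS G)] M) (v : Fin n → G),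
        (L φ : (Fin n → G) → M) v =
          φ (DirectSum.lof (MonoidAlgebra K (ExelS G)) _ _ v
              ⟨of K (ExelS G) (eTuple v), ⟨1, by simp⟩⟩)) ∧
      ∀ (f : Cpar K G M n) (v : Fin n → G)
        (x : ↥(LinearMap.range (LinearMap.toSpanSingleton
          (MonoidAlgebra K (ExelS G)) (MonoidAlgebra K (ExelS G)) (of K (ExelS G) (eTuple v))))),
        (L.symm f) (DirectSum.lof (MonoidAlgebra K (ExelS G)) _ _ v x) =
          (x : MonoidAlgebra K (ExelS G)) • (f : (Fin n → G) → M) v := by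
  have he (v : Fin n → G) : IsIdempotentElem (of K (ExelS G) (eTuple v)) :=
    (isIdempotentElem_eTuple v).map (of K (ExelS G))
  exact ⟨IsIdempotentElem.homDirectSumEquivPiFixedBy K he, fun _ _ => rfl,
    IsIdempotentElem.homDirectSumEquivPiFixedBy_symm_apply_lof he⟩

end
end

section
/- Let α be a unital partial action of G on A with enveloping action (B,β), B = Σ_{g∈G} β_g(φ(A)) inside the function ring F of maps G → A, where β_g(f)(t) = f(g⁻¹t) and φ(a)(t) = α_{t⁻¹}(1_t a). Then every w ∈ Z⁰_par(G,A), i.e. every a ∈ A with α_g(1_{g⁻¹}a) = 1_g a for all g, has a unique globalization: there is a unique u ∈ M(B) with β*_g(u) = u for all g and φ(1_A)u = φ(w); explicitly, u is the constant function with value w. -/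
/-!
Multiplication by a partial `0`-cocycle `w` commutes with every `α_s` on its domain:
`w · α_s(1_{s⁻¹} a) = α_s(1_{s⁻¹} w a)`, and symmetrically on the right. Hence the constant
function `w` maps each generator `β_g(φ(a))` of `B` to `β_g(φ(w a))` (resp. `β_g(φ(a w))`), so it
is a multiplier of `B`, and it is plainly `β`-invariant. Conversely, `β`-invariance of a
multiplier `u` tested against `φ(1)`, whose value at `1` is `1`, forces `u` to be constant, and
evaluating `φ(1) u = φ(w)` at `1` identifies the constant as `w`.
-/

section

variable {G : Type*} [Group G] {A : Type*} [Ring A]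

/-- The embedding `φ : A → F`, `φ(a)(t) = α_{t⁻¹}(1_t a)`, of `A` into the ring `F` of
functions `G → A`. -/
def phiF (e : G → A) (act : G → A → A) (a : A) : G → A := fun t => act t⁻¹ (e t * a)

/-- The global action `β` of `G` on the function ring `F = (G → A)`:
`β_g(f)(t) = f(g⁻¹ t)`. -/
def betaF (g : G) (f : G → A) : G → A := fun t => f (g⁻¹ * t)

/-- The subring `B = Σ_{g ∈ G} β_g(φ(A))` of `F` underlying the enveloping action, as an
additive subgroup of `F`. -/
def envB (e : G → A) (act : G → A → A) : AddSubgroup (G → A) :=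
  AddSubgroup.closure (⋃ g : G, betaF g '' Set.range (phiF e act))

theorem mul_mul_mul_of_central_idempotent {R : Type*} [Semigroup R] {p : R}
    (hc : ∀ a, p * a = a * p) (hp : p * p = p) (x y : R) : (p * x) * (p * y) = p * (x * y) := by
  rw [mul_assoc, ← mul_assoc x, ← hc, ← mul_assoc, ← mul_assoc, hp, mul_assoc]

theorem betaF_one {α : Type*} (f : G → α) : betaF 1 f = f := by
  funext t
  simp [betaF]

theorem apply_eq_apply_one_of_betaF_mul {M : Type*} [MulOneClass M] {b u : G → M} (hb : b 1 = 1)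
    (hu : ∀ g, betaF g (b * u) = betaF g b * u) (t : G) : u t = u 1 := by
  simpa [betaF, hb] using (congrFun (hu t) t).symm

section Semigroup

variable {R : Type*} [Semigroup R] {e : G → R} {act : G → R → R}

theorem act_mul_act (he_central : ∀ g a, e g * a = a * e g) (he_idem : ∀ g, e g * e g = e g)
    (hmul : ∀ g a b, act g ((e g⁻¹ * a) * (e g⁻¹ * b)) = act g (e g⁻¹ * a) * act g (e g⁻¹ * b))
    (s : G) (x y : R) : act s (e s⁻¹ * x) * act s (e s⁻¹ * y) = act s (e s⁻¹ * (x * y)) := by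
  rw [← hmul, mul_mul_mul_of_central_idempotent (he_central s⁻¹) (he_idem s⁻¹)]

theorem mul_act_of_cocycle (he_central : ∀ g a, e g * a = a * e g)
    (hrange : ∀ g a, e g * act g (e g⁻¹ * a) = act g (e g⁻¹ * a))
    (hmul : ∀ s x y, act s (e s⁻¹ * x) * act s (e s⁻¹ * y) = act s (e s⁻¹ * (x * y)))
    {w : R} (hw : ∀ g, act g (e g⁻¹ * w) = e g * w) (s : G) (a : R) :
    w * act s (e s⁻¹ * a) = act s (e s⁻¹ * (w * a)) :=
  calc w * act s (e s⁻¹ * a) = e s * w * act s (e s⁻¹ * a) := by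
        rw [he_central s w, mul_assoc, hrange]
    _ = act s (e s⁻¹ * w) * act s (e s⁻¹ * a) := by rw [hw]
    _ = act s (e s⁻¹ * (w * a)) := hmul s w a

theorem act_mul_of_cocycle (he_central : ∀ g a, e g * a = a * e g)
    (hrange : ∀ g a, e g * act g (e g⁻¹ * a) = act g (e g⁻¹ * a))
    (hmul : ∀ s x y, act s (e s⁻¹ * x) * act s (e s⁻¹ * y) = act s (e s⁻¹ * (x * y)))
    {w : R} (hw : ∀ g, act g (e g⁻¹ * w) = e g * w) (s : G) (a : R) :
    act s (e s⁻¹ * a) * w = act s (e s⁻¹ * (a * w)) :=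
  calc act s (e s⁻¹ * a) * w = act s (e s⁻¹ * a) * (e s * w) := by
        rw [← mul_assoc, ← he_central s, hrange]
    _ = act s (e s⁻¹ * a) * act s (e s⁻¹ * w) := by rw [hw]
    _ = act s (e s⁻¹ * (a * w)) := hmul s a w

end Semigroup

section

variable {e : G → A} {act : G → A → A} {w : A}

theorem const_mul_betaF_phiF (h : ∀ s a, w * act s (e s⁻¹ * a) = act s (e s⁻¹ * (w * a)))
    (g : G) (a : A) :
    (fun _ : G => w) * betaF g (phiF e act a) = betaF g (phiF e act (w * a)) := by
  funext t
  simpa only [Pi.mul_apply, betaF, phiF, inv_inv] using h (g⁻¹ * t)⁻¹ a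

theorem betaF_phiF_mul_const (h : ∀ s a, act s (e s⁻¹ * a) * w = act s (e s⁻¹ * (a * w)))
    (g : G) (a : A) :
    betaF g (phiF e act a) * (fun _ : G => w) = betaF g (phiF e act (a * w)) := by
  funext t
  simpa only [Pi.mul_apply, betaF, phiF, inv_inv] using h (g⁻¹ * t)⁻¹ a

theorem phiF_apply_one (he_one : e 1 = 1) (hact_one : ∀ a, act 1 a = a) (a : A) :
    phiF e act a 1 = a := by
  simp [phiF, he_one, hact_one]

variable (e act)

theorem betaF_phiF_mem_envB (g : G) (a : A) : betaF g (phiF e act a) ∈ envB e act :=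
  AddSubgroup.subset_closure (Set.mem_iUnion.2 ⟨g, Set.mem_image_of_mem _ ⟨a, rfl⟩⟩)

theorem phiF_mem_envB (a : A) : phiF e act a ∈ envB e act := by
  simpa [betaF_one] using betaF_phiF_mem_envB e act 1 a

theorem map_mem_envB (L : (G → A) →+ (G → A))
    (hL : ∀ g a, L (betaF g (phiF e act a)) ∈ envB e act) {b : G → A} (hb : b ∈ envB e act) :
    L b ∈ envB e act := by
  have hle : envB e act ≤ (envB e act).comap L :=
    (AddSubgroup.closure_le _).2 <| Set.iUnion_subset fun g => by
      rintro _ ⟨_, ⟨a, rfl⟩, rfl⟩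
      exact hL g a
  exact hle hb

end

theorem zeroCocycle_unique_globalization_general
    (e : G → A) (act : G → A → A)
    (he_central : ∀ g a, e g * a = a * e g)
    (he_idem : ∀ g, e g * e g = e g)
    (he_one : e 1 = 1)
    (hact_one : ∀ a, act 1 a = a)
    (hrange : ∀ g a, e g * act g (e g⁻¹ * a) = act g (e g⁻¹ * a))
    (hmul : ∀ g a b, act g ((e g⁻¹ * a) * (e g⁻¹ * b)) = act g (e g⁻¹ * a) * act g (e g⁻¹ * b))
    (w : A) (hw : ∀ g, act g (e g⁻¹ * w) = e g * w) :
    ((∀ b ∈ envB e act, (fun _ : G => w) * b ∈ envB e act ∧ b * (fun _ : G => w) ∈ envB e act) ∧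
     (∀ (g : G) (f : G → A), betaF g ((fun _ : G => w) * f) = (fun _ : G => w) * betaF g f) ∧
     phiF e act 1 * (fun _ : G => w) = phiF e act w) ∧
    (∀ u : G → A,
      (∀ b ∈ envB e act, u * b ∈ envB e act ∧ b * u ∈ envB e act) →
      (∀ (g : G) (b : G → A), b ∈ envB e act →
        betaF g (u * b) = u * betaF g b ∧ betaF g (b * u) = betaF g b * u) →
      phiF e act 1 * u = phiF e act w →
      ∀ b ∈ envB e act, u * b = (fun _ : G => w) * b ∧ b * u = b * (fun _ : G => w)) := by
  have hact_mul := act_mul_act he_central he_idem hmul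
  have hconst_mul := const_mul_betaF_phiF (mul_act_of_cocycle he_central hrange hact_mul hw)
  have hmul_const := betaF_phiF_mul_const (act_mul_of_cocycle he_central hrange hact_mul hw)
  have hmultiplier : ∀ b ∈ envB e act,
      (fun _ : G => w) * b ∈ envB e act ∧ b * (fun _ : G => w) ∈ envB e act := fun b hb =>
    ⟨map_mem_envB e act (AddMonoidHom.mulLeft _)
        (fun g a => by simpa [hconst_mul] using betaF_phiF_mem_envB e act g (w * a)) hb,
      map_mem_envB e act (AddMonoidHom.mulRight _)
        (fun g a => by simpa [hmul_const] using betaF_phiF_mem_envB e act g (a * w)) hb⟩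
  refine ⟨⟨hmultiplier, fun _ _ => rfl, by simpa [betaF_one] using hmul_const 1 1⟩, ?_⟩
  intro u _ hinv hphi
  have hu : u = fun _ => w := by
    funext t
    rw [apply_eq_apply_one_of_betaF_mul (phiF_apply_one he_one hact_one 1)
      (fun g => (hinv g _ (phiF_mem_envB e act 1)).2) t]
    simpa [phiF_apply_one he_one hact_one] using congrFun hphi 1
  subst hu
  exact fun _ _ => ⟨rfl, rfl⟩

/-- Every partial `0`-cocycle `w ∈ Z⁰_par(G,A)` (i.e. `α_g(1_{g⁻¹}w) = 1_g w` for all `g`)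
has a unique globalization in the multiplier algebra of `B`: the constant function `u₀ ≡ w`
is a multiplier of `B`, is `β`-invariant, satisfies `φ(1_A)u₀ = φ(w)`, and any
`β`-invariant multiplier `u` of `B` with `φ(1_A)u = φ(w)` agrees with `u₀` as a multiplier
of `B`. -/
theorem zeroCocycle_unique_globalization
    (e : G → A) (act : G → A → A)
    (he_central : ∀ g a, e g * a = a * e g)
    (he_idem : ∀ g, e g * e g = e g)
    (he_one : e 1 = 1)
    (hact_one : ∀ a, act 1 a = a)
    (hrange : ∀ g a, e g * act g (e g⁻¹ * a) = act g (e g⁻¹ * a))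
    (hadd : ∀ g a b, act g (e g⁻¹ * a + e g⁻¹ * b) = act g (e g⁻¹ * a) + act g (e g⁻¹ * b))
    (hmul : ∀ g a b, act g ((e g⁻¹ * a) * (e g⁻¹ * b)) = act g (e g⁻¹ * a) * act g (e g⁻¹ * b))
    (hbij : ∀ g, Set.BijOn (act g) {x | e g⁻¹ * x = x} {x | e g * x = x})
    (hcomp : ∀ g h a, e h⁻¹ * a = a → e g⁻¹ * act h a = act h a →
      e (g * h)⁻¹ * a = a ∧ act g (act h a) = act (g * h) a)
    (w : A) (hw : ∀ g, act g (e g⁻¹ * w) = e g * w) :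
    ((∀ b ∈ envB e act, (fun _ : G => w) * b ∈ envB e act ∧ b * (fun _ : G => w) ∈ envB e act) ∧
     (∀ (g : G) (f : G → A), betaF g ((fun _ : G => w) * f) = (fun _ : G => w) * betaF g f) ∧
     phiF e act 1 * (fun _ : G => w) = phiF e act w) ∧
    (∀ u : G → A,
      (∀ b ∈ envB e act, u * b ∈ envB e act ∧ b * u ∈ envB e act) →
      (∀ (g : G) (b : G → A), b ∈ envB e act →
        betaF g (u * b) = u * betaF g b ∧ betaF g (b * u) = betaF g b * u) →
      phiF e act 1 * u = phiF e act w →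
      ∀ b ∈ envB e act, u * b = (fun _ : G => w) * b ∧ b * u = b * (fun _ : G => w)) :=
  zeroCocycle_unique_globalization_general e act he_central he_idem he_one hact_one hrange hmul w hw

end
end

section
/- Let α be a unital transitive partial action of G on A = ∏_{λ∈Λ} A_λ (a product of indecomposable unital rings), H the stabilizer of the block A₁, Λ' a left transversal of H in G containing 1 with Λ ⊆ Λ'. Then for g ∈ Λ': (i) g ∈ Λ iff A₁ ⊆ D_{g⁻¹}; (ii) if g ∈ Λ and x ∈ G, then the representative of xg in Λ' lies in Λ iff A_g ⊆ D_{x⁻¹}, in which case α_x(A_g) = A_{\overline{xg}}. -/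
/-!
An element `h` of the stabilizer `H` of `x₀` fixes `x₀`, so by the composition axiom
`x₀ ∈ D (g h)⁻¹ ↔ x₀ ∈ D g⁻¹` and `σ (g h) x₀ = σ g x₀`: both the domain condition and the
block `σ g x₀` depend only on the coset `g H`. Composition with `σ g` and `σ g⁻¹` gives
`σ g x₀ ∈ D x⁻¹ ↔ x₀ ∈ D (x g)⁻¹`, and `x g = bar (x g) * h` with `h ∈ H`
turns this into the statement about the representative.
-/

open Set

structure IsPartialAction {G X : Type*} [Group G] (D : G → Set X) (σ : G → X → X) : Prop where
  dom_one : D 1 = univ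
  apply_one : ∀ x, σ 1 x = x
  bijOn : ∀ g, BijOn (σ g) (D g⁻¹) (D g)
  comp : ∀ g h x, x ∈ D h⁻¹ → σ h x ∈ D g⁻¹ → x ∈ D (g * h)⁻¹ ∧ σ g (σ h x) = σ (g * h) x

def partialStabilizer {G X : Type*} [Group G] (D : G → Set X) (σ : G → X → X) (x₀ : X) :
    Set G :=
  {h | x₀ ∈ D h⁻¹ ∧ σ h x₀ = x₀}

namespace IsPartialAction

variable {G X : Type*} [Group G] {D : G → Set X} {σ : G → X → X}

theorem apply_mem_dom_inv_inv (hα : IsPartialAction D σ) {g : G} {x : X} (hx : x ∈ D g⁻¹) :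
    σ g x ∈ D g⁻¹⁻¹ := by
  rw [inv_inv]
  exact (hα.bijOn g).mapsTo hx

theorem inv_apply_apply (hα : IsPartialAction D σ) {g : G} {x : X} (hx : x ∈ D g⁻¹) :
    σ g⁻¹ (σ g x) = x := by
  rw [(hα.comp g⁻¹ g x hx (hα.apply_mem_dom_inv_inv hx)).2, inv_mul_cancel, hα.apply_one]

theorem apply_mem_dom_iff (hα : IsPartialAction D σ) {g : G} {y : X} (hy : y ∈ D g⁻¹)
    (x : G) : σ g y ∈ D x⁻¹ ↔ y ∈ D (x * g)⁻¹ := by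
  refine ⟨fun hgy => (hα.comp x g y hy hgy).1, fun hxy => ?_⟩
  have hback : σ g⁻¹ (σ g y) ∈ D (x * g)⁻¹ := by rwa [hα.inv_apply_apply hy]
  simpa using (hα.comp (x * g) g⁻¹ (σ g y) (hα.apply_mem_dom_inv_inv hy) hback).1

theorem one_mem_partialStabilizer (hα : IsPartialAction D σ) (x₀ : X) :
    (1 : G) ∈ partialStabilizer D σ x₀ :=
  ⟨by simp [hα.dom_one], hα.apply_one x₀⟩

theorem inv_mem_partialStabilizer (hα : IsPartialAction D σ) {x₀ : X} {h : G}
    (hh : h ∈ partialStabilizer D σ x₀) : h⁻¹ ∈ partialStabilizer D σ x₀ := by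
  obtain ⟨hdom, hfix⟩ := hh
  refine ⟨?_, ?_⟩
  · simpa [hfix] using hα.apply_mem_dom_inv_inv hdom
  · simpa [hfix] using hα.inv_apply_apply hdom

theorem mem_dom_mul_of_mem_partialStabilizer (hα : IsPartialAction D σ) {x₀ : X} {g h : G}
    (hh : h ∈ partialStabilizer D σ x₀) (hg : x₀ ∈ D g⁻¹) :
    x₀ ∈ D (g * h)⁻¹ ∧ σ (g * h) x₀ = σ g x₀ := by
  obtain ⟨hdom, hfix⟩ := hh
  have := hα.comp g h x₀ hdom (by rwa [hfix])
  rwa [hfix, eq_comm] at this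

theorem mem_dom_mul_iff_of_mem_partialStabilizer (hα : IsPartialAction D σ) {x₀ : X}
    {g h : G} (hh : h ∈ partialStabilizer D σ x₀) : x₀ ∈ D (g * h)⁻¹ ↔ x₀ ∈ D g⁻¹ := by
  refine ⟨fun hgh => ?_, fun hg => (hα.mem_dom_mul_of_mem_partialStabilizer hh hg).1⟩
  simpa using (hα.mem_dom_mul_of_mem_partialStabilizer (hα.inv_mem_partialStabilizer hh) hgh).1

end IsPartialAction

theorem transversal_block_lemma_general
    {G : Type*} [Group G] {X : Type*}
    (D : G → Set X) (σ : G → X → X)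
    (hD1 : D 1 = Set.univ)
    (hσ1 : ∀ x, σ 1 x = x)
    (hbij : ∀ g, Set.BijOn (σ g) (D g⁻¹) (D g))
    (hcomp : ∀ g h x, x ∈ D h⁻¹ → σ h x ∈ D g⁻¹ →
      x ∈ D (g * h)⁻¹ ∧ σ g (σ h x) = σ (g * h) x)
    (x₀ : X)
    (Λ' : Set G)
    (bar : G → G)
    (hbar : ∀ y, bar y ∈ Λ' ∧
      ∃ h : G, (x₀ ∈ D h⁻¹ ∧ σ h x₀ = x₀) ∧ y = bar y * h) :
    ∀ g ∈ Λ',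
      ((∃ h : G, (x₀ ∈ D h⁻¹ ∧ σ h x₀ = x₀) ∧ x₀ ∈ D (g * h)⁻¹) ↔ x₀ ∈ D g⁻¹) ∧
      (x₀ ∈ D g⁻¹ → ∀ x : G,
        ((x₀ ∈ D (bar (x * g))⁻¹) ↔ σ g x₀ ∈ D x⁻¹) ∧
        (σ g x₀ ∈ D x⁻¹ → σ x (σ g x₀) = σ (bar (x * g)) x₀)) := by
  have hα : IsPartialAction D σ := ⟨hD1, hσ1, hbij, hcomp⟩
  intro g _
  refine ⟨⟨fun ⟨h, hh, hgh⟩ => (hα.mem_dom_mul_iff_of_mem_partialStabilizer hh).1 hgh,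
    fun hg => ⟨1, hα.one_mem_partialStabilizer x₀, by rwa [mul_one]⟩⟩, fun hg x => ?_⟩
  obtain ⟨-, h, hh, hxg⟩ := hbar (x * g)
  have hmove : σ g x₀ ∈ D x⁻¹ ↔ x₀ ∈ D (bar (x * g) * h)⁻¹ := by
    rw [← hxg]; exact hα.apply_mem_dom_iff hg x
  refine ⟨(hα.mem_dom_mul_iff_of_mem_partialStabilizer hh).symm.trans hmove.symm,
    fun hgx => ?_⟩
  have hbar_dom : x₀ ∈ D (bar (x * g))⁻¹ :=
    (hα.mem_dom_mul_iff_of_mem_partialStabilizer hh).1 (hmove.1 hgx)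
  calc σ x (σ g x₀) = σ (x * g) x₀ := (hα.comp x g x₀ hg hgx).2
    _ = σ (bar (x * g) * h) x₀ := by rw [← hxg]
    _ = σ (bar (x * g)) x₀ := (hα.mem_dom_mul_of_mem_partialStabilizer hh hbar_dom).2

/-- Lemma 5.1 of [DES2], at the level of the induced partial action of `G` on the set `X`
of blocks of `A = ∏_{λ∈Λ} A_λ`: here `D g` is the set of blocks of `D_g` and `σ g` is the
bijection `D g⁻¹ → D g` induced by `α_g`; the inclusion `A_μ ⊆ D_g` becomes `μ ∈ D g`;
the action is transitive, `x₀` is the base block `A₁`, `H = {h | x₀ ∈ D h⁻¹, σ h x₀ = x₀}`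
is its stabilizer, `Λ'` is a left transversal of `H` containing `1`, and `bar y` is the
representative in `Λ'` of `y H`.  Then, for `g ∈ Λ'`:
(i) membership of `x₀` in `D (g h)⁻¹` for some `h ∈ H` is equivalent to `x₀ ∈ D g⁻¹`
    (so "`g ∈ Λ`", i.e. `A₁ ⊆ D_{g⁻¹}`, only depends on the coset `gH`);
(ii) if `x₀ ∈ D g⁻¹` (i.e. `g ∈ Λ`), then for `x ∈ G` the block `A_g = σ g x₀` lies in
    `D_{x⁻¹}` iff `bar (x g) ∈ Λ`, in which case `α_x(A_g) = A_{bar (x g)}`. -/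
theorem transversal_block_lemma
    {G : Type*} [Group G] {X : Type*}
    (D : G → Set X) (σ : G → X → X)
    (hD1 : D 1 = Set.univ)
    (hσ1 : ∀ x, σ 1 x = x)
    (hbij : ∀ g, Set.BijOn (σ g) (D g⁻¹) (D g))
    (hcomp : ∀ g h x, x ∈ D h⁻¹ → σ h x ∈ D g⁻¹ →
      x ∈ D (g * h)⁻¹ ∧ σ g (σ h x) = σ (g * h) x)
    (htrans : ∀ x y : X, ∃ g, x ∈ D g⁻¹ ∧ σ g x = y)
    (x₀ : X)
    (Λ' : Set G) (hone : (1 : G) ∈ Λ')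
    (bar : G → G)
    (hbar : ∀ y, bar y ∈ Λ' ∧
      ∃ h : G, (x₀ ∈ D h⁻¹ ∧ σ h x₀ = x₀) ∧ y = bar y * h)
    (hbar_unique : ∀ y l, l ∈ Λ' →
      (∃ h : G, (x₀ ∈ D h⁻¹ ∧ σ h x₀ = x₀) ∧ y = l * h) → l = bar y) :
    ∀ g ∈ Λ',
      ((∃ h : G, (x₀ ∈ D h⁻¹ ∧ σ h x₀ = x₀) ∧ x₀ ∈ D (g * h)⁻¹) ↔ x₀ ∈ D g⁻¹) ∧
      (x₀ ∈ D g⁻¹ → ∀ x : G,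
        ((x₀ ∈ D (bar (x * g))⁻¹) ↔ σ g x₀ ∈ D x⁻¹) ∧
        (σ g x₀ ∈ D x⁻¹ → σ x (σ g x₀) = σ (bar (x * g)) x₀)) :=
  transversal_block_lemma_general D σ hD1 hσ1 hbij hcomp x₀ Λ' bar hbar
end

section
/- Let n ≥ 1 and w ∈ Z^n_par(G,A), where A = ∏_{g∈Λ} A_g is a product of blocks with transitive unital partial action α. Then w(x₁,…,x_n) = 1_{(x₁,…,x_n)}·∏_{g∈Λ} θ_g[ w(g⁻¹x₁,x₂,…,x_n) + Σ_{k=1}^{n−1}(−1)^k w(g⁻¹,x₁,…,x_kx_{k+1},…,x_n) + (−1)^n w(g⁻¹,x₁,…,x_{n−1}) ], where θ_g(a) = α_g(pr₁(a)). -/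
/-!
Fix a block `g = toG j` and put `u = (g⁻¹, x₁, …, x_n)`. The cocycle identity at `u` writes
`α_{g⁻¹}(1_g w(x))` as the alternating sum of the terms `1_{g⁻¹x₁⋯x_k} w(∂_k u)`. The map `θ_g` is
additive and, because `α_g(1_{g⁻¹}1_h) = 1_g 1_{gh}`, turns multiplication by `1_{g⁻¹y}` into
multiplication by `1_y`. Since `w(∂_k u)` is already fixed by every idempotent `1_{g⁻¹x₁⋯x_m}` with
`m ≠ k`, the factor `1_{x₁⋯x_k}` left in front of `θ_g(w(∂_k u))` may be replaced by
`1_{(x₁,…,x_n)}`. Evaluating `a = ∏_g θ_g(α_{g⁻¹}(1_g a))` at `a = w(x)` then gives the formula.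
-/

noncomputable section

/-- The idempotent `1_{(x₁,…,x_n)} = 1_{x₁} 1_{x₁x₂} ⋯ 1_{x₁⋯x_n}` of `A`. -/
def oneT {G : Type*} [Group G] {A : Type*} [Ring A] (e : G → A) {n : ℕ}
    (v : Fin n → G) : A :=
  (List.ofFn fun i : Fin n => e (Fin.partialProd v i.succ)).prod

/-- The projection `pr₁` of `A = ∏_{i} A_i` onto the block indexed by `i₀`. -/
def proj0 {ι : Type*} [DecidableEq ι] (R : ι → Type*) [∀ i, Ring (R i)] (i₀ : ι)
    (a : Π i, R i) : Π i, R i := fun j => if j = i₀ then a j else 0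

/-- The homomorphism `θ_g : A → A_g`, `θ_g(a) = α_g(pr₁(a))`, for `g = toG i ∈ Λ`. -/
def theta {G : Type*} [Group G] {ι : Type*} [DecidableEq ι] (R : ι → Type*)
    [∀ i, Ring (R i)] (e : G → Π i, R i) (act : G → (Π i, R i) → Π i, R i)
    (i₀ : ι) (toG : ι → G) (i : ι) (a : Π i, R i) : Π i, R i :=
  act (toG i) (e (toG i)⁻¹ * proj0 R i₀ a)

namespace List

theorem mul_prod_of_mem {M : Type*} [Monoid M] {L : List M} {a : M} (ha : a ∈ L)
    (hidem : IsIdempotentElem a) (hcomm : ∀ x ∈ L, Commute a x) : a * L.prod = L.prod := by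
  induction L with
  | nil => simp at ha
  | cons b t ih =>
    rcases List.mem_cons.mp ha with rfl | hmem
    · rw [List.prod_cons, ← mul_assoc, hidem]
    · rw [List.prod_cons, ← mul_assoc, (hcomm b List.mem_cons_self).eq, mul_assoc,
        ih hmem fun x hx => hcomm x (List.mem_cons_of_mem b hx)]

theorem prod_mul_eq_of_forall_mul_eq {M : Type*} [Monoid M] {L : List M} {x : M}
    (h : ∀ a ∈ L, a * x = x) : L.prod * x = x := by
  induction L with
  | nil => simp
  | cons b t ih =>
    rw [List.prod_cons, mul_assoc, ih fun a ha => h a (List.mem_cons_of_mem b ha),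
      h b List.mem_cons_self]

end List

section oneT

variable {G : Type*} [Group G] {A : Type*} [Ring A] {e : G → A}

theorem oneT_mul_eq_of_forall {n : ℕ} {v : Fin n → G} {y : A}
    (hy : ∀ i : Fin n, e (Fin.partialProd v i.succ) * y = y) : oneT e v * y = y :=
  List.prod_mul_eq_of_forall_mul_eq fun a ha => by
    obtain ⟨i, rfl⟩ := List.mem_ofFn.mp ha
    exact hy i

theorem idem_partialProd_mul_eq_oneT_mul (he_central : ∀ g a, e g * a = a * e g)
    (he_idem : ∀ g, e g * e g = e g) (he_one : e 1 = 1) {n : ℕ} (v : Fin n → G)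
    (k : Fin (n + 1)) {y : A} (hy : ∀ m ≠ k, e (Fin.partialProd v m) * y = y) :
    e (Fin.partialProd v k) * y = oneT e v * y := by
  have hz : oneT e v * (e (Fin.partialProd v k) * y) = e (Fin.partialProd v k) * y := by
    refine oneT_mul_eq_of_forall fun i => ?_
    rcases eq_or_ne i.succ k with rfl | hik
    · rw [← mul_assoc, he_idem]
    · rw [← mul_assoc, he_central, mul_assoc, hy _ hik]
  rw [← hz, ← mul_assoc]
  congr 1
  rcases Fin.eq_zero_or_eq_succ k with rfl | ⟨i, rfl⟩
  · rw [Fin.partialProd_zero, he_one, mul_one]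
  · rw [← he_central]
    exact List.mul_prod_of_mem (List.mem_ofFn.mpr ⟨i, rfl⟩) (he_idem _) fun x _ => he_central _ x

/-- The idempotents `1_{u₀⋯u_m}`, `m ≠ k`, are the factors of `1_{∂_k u}`. -/
theorem idem_partialProd_mul_contractNth (he_central : ∀ g a, e g * a = a * e g)
    (he_idem : ∀ g, e g * e g = e g) {n : ℕ} {w : (Fin (n + 1) → G) → A}
    (hw_mem : ∀ v, w v = oneT e v * w v) (u : Fin (n + 2) → G) {k m : Fin (n + 2)}
    (hm : m ≠ k) :
    e (Fin.partialProd u m.succ) * w (Fin.contractNth k (· * ·) u)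
      = w (Fin.contractNth k (· * ·) u) := by
  obtain ⟨i, rfl⟩ := Fin.exists_succAbove_eq hm
  have hmem : e (Fin.partialProd u (k.succAbove i).succ) ∈
      List.ofFn fun i => e (Fin.partialProd (Fin.contractNth k (· * ·) u) i.succ) :=
    List.mem_ofFn.mpr ⟨i, by simp [Fin.partialProd_contractNth, Fin.succ_succAbove_succ]⟩
  rw [hw_mem, ← mul_assoc, oneT, List.mul_prod_of_mem hmem (he_idem _) fun x _ => he_central _ x]

end oneT

/-- `e g` is the central idempotent `1_g` generating the domain `D_g = 1_g A`, and `act g`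
restricted to `D_{g⁻¹}` is the ring isomorphism `α_g : D_{g⁻¹} → D_g` (its values elsewhere are
irrelevant). -/
structure IsPartialAction_s19 {G : Type*} [Group G] {A : Type*} [Ring A] (e : G → A)
    (act : G → A → A) : Prop where
  commute : ∀ g a, e g * a = a * e g
  idem : ∀ g, e g * e g = e g
  one : e 1 = 1
  act_one : ∀ a, act 1 a = a
  mul_act : ∀ g a, e g * act g (e g⁻¹ * a) = act g (e g⁻¹ * a)
  act_add : ∀ g a b, act g (e g⁻¹ * a + e g⁻¹ * b) = act g (e g⁻¹ * a) + act g (e g⁻¹ * b)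
  act_mul : ∀ g a b, act g ((e g⁻¹ * a) * (e g⁻¹ * b)) = act g (e g⁻¹ * a) * act g (e g⁻¹ * b)
  act_act : ∀ g h a, e h⁻¹ * a = a → e g⁻¹ * act h a = act h a →
    e (g * h)⁻¹ * a = a ∧ act g (act h a) = act (g * h) a

namespace IsPartialAction_s19

variable {G : Type*} [Group G] {A : Type*} [Ring A] {e : G → A} {act : G → A → A}

theorem act_inv_act (hα : IsPartialAction_s19 e act) (g : G) (a : A) :
    act g⁻¹ (act g (e g⁻¹ * a)) = e g⁻¹ * a := by
  have h := hα.act_act g⁻¹ g (e g⁻¹ * a) (by rw [← mul_assoc, hα.idem])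
    (by rw [inv_inv]; exact hα.mul_act g a)
  rw [h.2, inv_mul_cancel, hα.act_one]

/-- `α_g(1_{g⁻¹}1_h)` lies in `D_{gh}`: pulled back by `α_{g⁻¹}` it lies in `D_h`, and the
composability axiom moves it along `α_{h⁻¹}` after `α_{g⁻¹}`. -/
theorem idem_mul_mul_act (hα : IsPartialAction_s19 e act) (g h : G) :
    e (g * h) * act g (e g⁻¹ * e h) = act g (e g⁻¹ * e h) := by
  have h := hα.act_act h⁻¹ g⁻¹ (act g (e g⁻¹ * e h)) (by rw [inv_inv]; exact hα.mul_act g (e h))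
    (by rw [inv_inv, hα.act_inv_act, ← mul_assoc, hα.commute h, mul_assoc, hα.idem])
  rw [mul_inv_rev, inv_inv, inv_inv] at h
  exact h.1

theorem act_idem_mul_idem (hα : IsPartialAction_s19 e act) (g h : G) :
    act g (e g⁻¹ * e h) = e g * e (g * h) := by
  set x := act g (e g⁻¹ * e h)
  set y := act g⁻¹ (e g * e (g * h))
  have hx : e g * e (g * h) * x = x := by
    rw [mul_assoc, hα.idem_mul_mul_act, hα.mul_act]
  have hy_left : e g⁻¹ * y = y := by simpa using hα.mul_act g⁻¹ (e (g * h))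
  have hy_right : e h * y = y := by simpa using hα.idem_mul_mul_act g⁻¹ (g * h)
  have hy_fwd : act g y = e g * e (g * h) := by simpa using hα.act_inv_act g⁻¹ (e (g * h))
  calc x = e g * e (g * h) * x := hx.symm
    _ = x * (e g * e (g * h)) := by
      rw [mul_assoc, hα.commute (g * h), ← mul_assoc, hα.commute g, mul_assoc]
    _ = x * act g (e g⁻¹ * y) := by rw [hy_left, hy_fwd]
    _ = act g ((e g⁻¹ * e h) * (e g⁻¹ * y)) := (hα.act_mul g (e h) y).symm
    _ = e g * e (g * h) := by rw [hy_left, mul_assoc, hy_right, hy_left, hy_fwd]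

theorem act_idem_inv_mul_mul (hα : IsPartialAction_s19 e act) (g x : G) (a : A) :
    act g (e g⁻¹ * (e (g⁻¹ * x) * a)) = e x * act g (e g⁻¹ * a) := by
  have hsplit : e g⁻¹ * (e (g⁻¹ * x) * a) = (e g⁻¹ * e (g⁻¹ * x)) * (e g⁻¹ * a) := by
    rw [← mul_assoc (e g⁻¹ * e _), mul_assoc (e g⁻¹), ← hα.commute g⁻¹ (e (g⁻¹ * x)),
      ← mul_assoc (e g⁻¹) (e g⁻¹), hα.idem, mul_assoc]
  rw [hsplit, hα.act_mul, hα.act_idem_mul_idem, mul_inv_cancel_left, hα.commute g,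
    mul_assoc, hα.mul_act]

end IsPartialAction_s19

theorem act_eq_sum_of_cocycle {G : Type*} [Group G] {A : Type*} [Ring A] {e : G → A}
    {act : G → A → A} {n : ℕ} {w : (Fin (n + 1) → G) → A}
    (hw_cocycle : ∀ v : Fin (n + 2) → G,
      act (v 0) (e (v 0)⁻¹ * w (Fin.tail v)) +
        ∑ j : Fin (n + 2), (-1 : ℤ) ^ ((j : ℕ) + 1) •
          (e (Fin.partialProd v j.succ) * w (Fin.contractNth j (· * ·) v)) = 0)
    (g : G) (v : Fin (n + 1) → G) :
    act g (e g⁻¹ * w v) = ∑ k : Fin (n + 2), (-1 : ℤ) ^ (k : ℕ) •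
      (e (Fin.partialProd (Fin.cons g v) k.succ) *
        w (Fin.contractNth k (· * ·) (Fin.cons g v))) := by
  have hc := hw_cocycle (Fin.cons g v)
  simp only [Fin.cons_zero, Fin.tail_cons] at hc
  rw [eq_neg_of_add_eq_zero_left hc, ← Finset.sum_neg_distrib]
  simp [pow_succ]

section Theta

variable {G : Type*} [Group G] {ι : Type*} [DecidableEq ι] {R : ι → Type*} [∀ i, Ring (R i)]
  {e : G → Π i, R i} {act : G → (Π i, R i) → Π i, R i} {i₀ : ι} {toG : ι → G}

theorem proj0_add (a b : Π i, R i) : proj0 R i₀ (a + b) = proj0 R i₀ a + proj0 R i₀ b := by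
  funext j
  by_cases hj : j = i₀ <;> simp [proj0, hj]

theorem proj0_mul_left (c a : Π i, R i) : proj0 R i₀ (c * a) = c * proj0 R i₀ a := by
  funext j
  by_cases hj : j = i₀ <;> simp [proj0, hj]

variable (i₀ toG) in
def thetaAddHom (hα : IsPartialAction_s19 e act) (j : ι) : (Π i, R i) →+ Π i, R i :=
  AddMonoidHom.mk' (theta R e act i₀ toG j) fun a b => by
    simp only [theta, proj0_add, mul_add, hα.act_add]

theorem thetaAddHom_apply (hα : IsPartialAction_s19 e act) (j : ι) (a : Π i, R i) :
    thetaAddHom i₀ toG hα j a = theta R e act i₀ toG j a :=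
  rfl

theorem theta_idem_inv_mul_mul (hα : IsPartialAction_s19 e act) (j : ι) (x : G) (a : Π i, R i) :
    theta R e act i₀ toG j (e ((toG j)⁻¹ * x) * a) = e x * theta R e act i₀ toG j a := by
  rw [theta, proj0_mul_left]
  exact hα.act_idem_inv_mul_mul _ _ _

theorem theta_idem_mul_contractNth_cons (hα : IsPartialAction_s19 e act) {n : ℕ}
    {w : (Fin (n + 1) → G) → Π i, R i} (hw_mem : ∀ v, w v = oneT e v * w v) (j : ι)
    (v : Fin (n + 1) → G) (k : Fin (n + 2)) :
    theta R e act i₀ toG j (e (Fin.partialProd (Fin.cons (toG j)⁻¹ v) k.succ) *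
        w (Fin.contractNth k (· * ·) (Fin.cons (toG j)⁻¹ v)))
      = oneT e v *
          theta R e act i₀ toG j (w (Fin.contractNth k (· * ·) (Fin.cons (toG j)⁻¹ v))) := by
  have hθ : ∀ m (a : Π i, R i), theta R e act i₀ toG j
      (e (Fin.partialProd (Fin.cons (toG j)⁻¹ v) m.succ) * a)
        = e (Fin.partialProd v m) * theta R e act i₀ toG j a := fun m a => by
    rw [Fin.partialProd_succ', Fin.cons_zero, Fin.tail_cons, theta_idem_inv_mul_mul hα]
  rw [hθ]
  refine idem_partialProd_mul_eq_oneT_mul hα.commute hα.idem hα.one v k fun m hm => ?_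
  rw [← hθ, idem_partialProd_mul_contractNth hα.commute hα.idem hw_mem _ hm]

end Theta

/-- The blocks of `A` are indexed by `ι`, with `toG : ι → G` enumerating `Λ`; the summand `p = n`
of the alternating sum is the last term `(−1)^n w(g⁻¹,x₁,…,x_{n−1})`. -/
theorem cocycle_eq_product_of_theta_general
    {G : Type*} [Group G] {ι : Type*} [DecidableEq ι]
    (R : ι → Type*) [∀ i, Ring (R i)]
    (e : G → Π i, R i) (act : G → (Π i, R i) → Π i, R i)
    (he_central : ∀ g a, e g * a = a * e g)
    (he_idem : ∀ g, e g * e g = e g)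
    (he_one : e 1 = 1)
    (hact_one : ∀ a, act 1 a = a)
    (hrange : ∀ g a, e g * act g (e g⁻¹ * a) = act g (e g⁻¹ * a))
    (hadd : ∀ g a b, act g (e g⁻¹ * a + e g⁻¹ * b) = act g (e g⁻¹ * a) + act g (e g⁻¹ * b))
    (hmul : ∀ g a b, act g ((e g⁻¹ * a) * (e g⁻¹ * b)) = act g (e g⁻¹ * a) * act g (e g⁻¹ * b))
    (hcomp : ∀ g h a, e h⁻¹ * a = a → e g⁻¹ * act h a = act h a →
      e (g * h)⁻¹ * a = a ∧ act g (act h a) = act (g * h) a)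
    (i₀ : ι) (toG : ι → G)
    (hdecomp : ∀ (a : Π i, R i) (j : ι),
      a j = theta R e act i₀ toG j (act (toG j)⁻¹ (e (toG j) * a)) j)
    {n : ℕ} (w : (Fin (n + 1) → G) → Π i, R i)
    (hw_mem : ∀ v, w v = oneT e v * w v)
    (hw_cocycle : ∀ v : Fin (n + 2) → G,
      act (v 0) (e (v 0)⁻¹ * w (Fin.tail v)) +
        ∑ j : Fin (n + 2), (-1 : ℤ) ^ ((j : ℕ) + 1) •
          (e (Fin.partialProd v j.succ) * w (Fin.contractNth j (· * ·) v)) = 0) :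
    ∀ v : Fin (n + 1) → G,
      w v = oneT e v *
        fun j : ι =>
          theta R e act i₀ toG j
            (w (Fin.contractNth 0 (· * ·) (Fin.cons (toG j)⁻¹ v)) +
              ∑ p : Fin (n + 1), (-1 : ℤ) ^ ((p : ℕ) + 1) •
                w (Fin.contractNth p.succ (· * ·) (Fin.cons (toG j)⁻¹ v))) j := by
  have hα : IsPartialAction_s19 e act :=
    ⟨he_central, he_idem, he_one, hact_one, hrange, hadd, hmul, hcomp⟩
  intro v
  funext j
  have hcocycle := act_eq_sum_of_cocycle hw_cocycle (toG j)⁻¹ v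
  rw [inv_inv] at hcocycle
  calc w v j = theta R e act i₀ toG j (act (toG j)⁻¹ (e (toG j) * w v)) j := hdecomp (w v) j
    _ = (oneT e v * theta R e act i₀ toG j (∑ k : Fin (n + 2), (-1 : ℤ) ^ (k : ℕ) •
          w (Fin.contractNth k (· * ·) (Fin.cons (toG j)⁻¹ v)))) j := by
      change thetaAddHom i₀ toG hα j _ j = (oneT e v * thetaAddHom i₀ toG hα j _) j
      simp only [hcocycle, map_sum, map_zsmul, Finset.mul_sum, mul_smul_comm, thetaAddHom_apply,
        theta_idem_mul_contractNth_cons hα hw_mem]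
    _ = _ := by
      rw [Fin.sum_univ_succ]
      simp

/-- Let `A = ∏_{g∈Λ} A_g` be a product of blocks with a transitive unital partial action
`α` of `G`, and `w ∈ Z^n_par(G,A)` (`n ≥ 1`).  Then
`w(x₁,…,x_n) = 1_{(x₁,…,x_n)} ∏_{g∈Λ} θ_g[ w(g⁻¹x₁,x₂,…,x_n)
  + Σ_{k=1}^{n−1}(−1)^k w(g⁻¹,x₁,…,x_kx_{k+1},…,x_n) + (−1)^n w(g⁻¹,x₁,…,x_{n−1}) ]`.
Here the blocks of `A` are indexed by `ι`, identified with the subset `toG(ι) = Λ ⊆ G`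
(with base block `i₀`, `toG i₀ = 1`), `θ_i(a) = α_{toG i}(pr₁(a))` lands in the block `i`,
and the decomposition `a = ∏_g θ_g(α_{g⁻¹}(1_g a))` holds.  The alternating sum below is
indexed so that its summand `p = n` is the last term `(−1)^n w(g⁻¹,x₁,…,x_{n−1})`. -/
theorem cocycle_eq_product_of_theta
    {G : Type*} [Group G] {ι : Type*} [DecidableEq ι]
    (R : ι → Type*) [∀ i, Ring (R i)]
    (e : G → Π i, R i) (act : G → (Π i, R i) → Π i, R i)
    (he_central : ∀ g a, e g * a = a * e g)
    (he_idem : ∀ g, e g * e g = e g)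
    (he_one : e 1 = 1)
    (hact_one : ∀ a, act 1 a = a)
    (hrange : ∀ g a, e g * act g (e g⁻¹ * a) = act g (e g⁻¹ * a))
    (hadd : ∀ g a b, act g (e g⁻¹ * a + e g⁻¹ * b) = act g (e g⁻¹ * a) + act g (e g⁻¹ * b))
    (hmul : ∀ g a b, act g ((e g⁻¹ * a) * (e g⁻¹ * b)) = act g (e g⁻¹ * a) * act g (e g⁻¹ * b))
    (hbij : ∀ g, Set.BijOn (act g) {x | e g⁻¹ * x = x} {x | e g * x = x})
    (hcomp : ∀ g h a, e h⁻¹ * a = a → e g⁻¹ * act h a = act h a →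
      e (g * h)⁻¹ * a = a ∧ act g (act h a) = act (g * h) a)
    (i₀ : ι) (toG : ι → G) (htoG_inj : Function.Injective toG) (htoG_one : toG i₀ = 1)
    (hθ_supp : ∀ (i : ι) (a : Π i, R i) (j : ι), j ≠ i → theta R e act i₀ toG i a j = 0)
    (hblock : ∀ (i : ι) (a : Π i, R i), e (toG i)⁻¹ * proj0 R i₀ a = proj0 R i₀ a)
    (hdecomp : ∀ (a : Π i, R i) (j : ι),
      a j = theta R e act i₀ toG j (act (toG j)⁻¹ (e (toG j) * a)) j)
    {n : ℕ} (w : (Fin (n + 1) → G) → Π i, R i)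
    (hw_mem : ∀ v, w v = oneT e v * w v)
    (hw_cocycle : ∀ v : Fin (n + 2) → G,
      act (v 0) (e (v 0)⁻¹ * w (Fin.tail v)) +
        ∑ j : Fin (n + 2), (-1 : ℤ) ^ ((j : ℕ) + 1) •
          (e (Fin.partialProd v j.succ) * w (Fin.contractNth j (· * ·) v)) = 0) :
    ∀ v : Fin (n + 1) → G,
      w v = oneT e v *
        fun j : ι =>
          theta R e act i₀ toG j
            (w (Fin.contractNth 0 (· * ·) (Fin.cons (toG j)⁻¹ v)) +
              ∑ p : Fin (n + 1), (-1 : ℤ) ^ ((p : ℕ) + 1) •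
                w (Fin.contractNth p.succ (· * ·) (Fin.cons (toG j)⁻¹ v))) j :=
  cocycle_eq_product_of_theta_general R e act he_central he_idem he_one hact_one hrange hadd hmul
    hcomp i₀ toG hdecomp w hw_mem hw_cocycle

end
end
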